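/- arXiv:1208.5354 — 9 statements merged into one kernel-verified Lean document; each statement's English description precedes it below -/
import Mathlib

section
/- Let L = (L; ∨, ∧, g) be a subdirectly irreducible distributive rotational lattice. If a ∈ L is stable (g(a) = a), then a is either the least element of L or the greatest element of L. -/
/-- A congruence of a rotational lattice `(L; ⊔, ⊓, g)`: an equivalence relation
compatible with `⊔`, `⊓` and `g`. -/
def IsCongruence {L : Type*} [Lattice L] (g : L → L) (r : L → L → Prop) : Prop :=
  Equivalence r ∧
  (∀ x₁ y₁ x₂ y₂, r x₁ y₁ → r x₂ y₂ → r (x₁ ⊔ x₂) (y₁ ⊔ y₂)) ∧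
  (∀ x₁ y₁ x₂ y₂, r x₁ y₁ → r x₂ y₂ → r (x₁ ⊓ x₂) (y₁ ⊓ y₂)) ∧
  (∀ x y, r x y → r (g x) (g y))

/-- Subdirect irreducibility: there is a smallest congruence distinct from equality. -/
def SubdirectlyIrreducible {L : Type*} [Lattice L] (g : L → L) : Prop :=
  ∃ μ : L → L → Prop, IsCongruence g μ ∧ μ ≠ (· = ·) ∧
    ∀ θ : L → L → Prop, IsCongruence g θ → θ ≠ (· = ·) → ∀ x y, μ x y → θ x y

/-- In a subdirectly irreducible distributive rotational lattice,
every stable element is the least or the greatest element. -/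
theorem stmt_2 {L : Type*} [DistribLattice L] (g : L → L)
    (hsup : ∀ x y : L, g (x ⊔ y) = g x ⊔ g y)
    (hinf : ∀ x y : L, g (x ⊓ y) = g x ⊓ g y)
    (hbij : Function.Bijective g)
    (hord : ∃ n : ℕ, 0 < n ∧ g^[n] = id)
    (hSI : SubdirectlyIrreducible g)
    (a : L) (ha : g a = a) :
    (∀ x : L, a ≤ x) ∨ (∀ x : L, x ≤ a) := by
  -- The two congruences: collapse via join with a, and via meet with a.
  have hcong1 : IsCongruence g (fun x y => x ⊔ a = y ⊔ a) := by
    refine ⟨⟨fun x => rfl, fun h => h.symm, fun h1 h2 => h1.trans h2⟩, ?_, ?_, ?_⟩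
    · intro x₁ y₁ x₂ y₂ h1 h2
      calc x₁ ⊔ x₂ ⊔ a = (x₁ ⊔ a) ⊔ (x₂ ⊔ a) := by ac_rfl
        _ = (y₁ ⊔ a) ⊔ (y₂ ⊔ a) := by rw [h1, h2]
        _ = y₁ ⊔ y₂ ⊔ a := by ac_rfl
    · intro x₁ y₁ x₂ y₂ h1 h2
      calc x₁ ⊓ x₂ ⊔ a = (x₁ ⊔ a) ⊓ (x₂ ⊔ a) := by rw [sup_inf_right]
        _ = (y₁ ⊔ a) ⊓ (y₂ ⊔ a) := by rw [h1, h2]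
        _ = y₁ ⊓ y₂ ⊔ a := by rw [sup_inf_right]
    · intro x y h
      calc g x ⊔ a = g x ⊔ g a := by rw [ha]
        _ = g (x ⊔ a) := (hsup x a).symm
        _ = g (y ⊔ a) := by rw [h]
        _ = g y ⊔ g a := hsup y a
        _ = g y ⊔ a := by rw [ha]
  have hcong2 : IsCongruence g (fun x y => x ⊓ a = y ⊓ a) := by
    refine ⟨⟨fun x => rfl, fun h => h.symm, fun h1 h2 => h1.trans h2⟩, ?_, ?_, ?_⟩
    · intro x₁ y₁ x₂ y₂ h1 h2
      calc (x₁ ⊔ x₂) ⊓ a = (x₁ ⊓ a) ⊔ (x₂ ⊓ a) := by rw [inf_sup_right]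
        _ = (y₁ ⊓ a) ⊔ (y₂ ⊓ a) := by rw [h1, h2]
        _ = (y₁ ⊔ y₂) ⊓ a := by rw [inf_sup_right]
    · intro x₁ y₁ x₂ y₂ h1 h2
      calc x₁ ⊓ x₂ ⊓ a = (x₁ ⊓ a) ⊓ (x₂ ⊓ a) := by ac_rfl
        _ = (y₁ ⊓ a) ⊓ (y₂ ⊓ a) := by rw [h1, h2]
        _ = y₁ ⊓ y₂ ⊓ a := by ac_rfl
    · intro x y h
      calc g x ⊓ a = g x ⊓ g a := by rw [ha]
        _ = g (x ⊓ a) := (hinf x a).symm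
        _ = g (y ⊓ a) := by rw [h]
        _ = g y ⊓ g a := hinf y a
        _ = g y ⊓ a := by rw [ha]
  obtain ⟨μ, hμc, hμne, hμmin⟩ := hSI
  -- extract a pair x ≠ y with μ x y
  have ⟨x₀, y₀, hxy, hne⟩ : ∃ x y, μ x y ∧ x ≠ y := by
    by_contra h
    push_neg at h
    apply hμne
    funext x y
    apply propext
    constructor
    · intro hxy; exact h x y hxy
    · rintro rfl; exact hμc.1.1 x
  -- one of the two congruences must equal equality
  by_cases h1 : (fun x y : L => x ⊔ a = y ⊔ a) = (· = ·)
  · left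
    intro x
    have he : x ⊔ a = (x ⊔ a) ⊔ a := by rw [sup_assoc, sup_idem]
    have hx : x = x ⊔ a := cast (congrFun (congrFun h1 x) (x ⊔ a)) he
    rw [hx]; exact le_sup_right
  · by_cases h2 : (fun x y : L => x ⊓ a = y ⊓ a) = (· = ·)
    · right
      intro x
      have he : x ⊓ a = (x ⊓ a) ⊓ a := by rw [inf_assoc, inf_idem]
      have hx : x = x ⊓ a := cast (congrFun (congrFun h2 x) (x ⊓ a)) he
      rw [hx]; exact inf_le_right
    · exfalso
      have hx1 := hμmin _ hcong1 h1 x₀ y₀ hxy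
      have hx2 := hμmin _ hcong2 h2 x₀ y₀ hxy
      exact hne (eq_of_inf_eq_sup_eq hx2 hx1)
end

section
/- Let L be a subdirectly irreducible distributive rotational lattice of order n, and let M be a subalgebra of L (closed under ∨, ∧, g) on which the restriction of g is not the identity map. Then M contains the least element 0_L and the greatest element 1_L of L (in particular, L is bounded). -/
section Aux

variable {L : Type*} [Lattice L] (g : L → L) (x : L)

/-- Meet of the first `k+1` elements of the `g`-orbit of `x`. -/
def oInf : ℕ → L
  | 0 => x
  | k+1 => oInf k ⊓ g^[k+1] x

/-- Join of the first `k+1` elements of the `g`-orbit of `x`. -/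
def oSup : ℕ → L
  | 0 => x
  | k+1 => oSup k ⊔ g^[k+1] x

lemma oInf_le : ∀ k, ∀ j ≤ k, oInf g x k ≤ g^[j] x := by
  intro k
  induction k with
  | zero => intro j hj; interval_cases j; exact le_rfl
  | succ k ih =>
    intro j hj
    rcases Nat.lt_succ_iff_lt_or_eq.mp (Nat.lt_succ_of_le hj) with h | h
    · exact inf_le_left.trans (ih j (Nat.lt_succ_iff.mp h))
    · subst h; exact inf_le_right

lemma le_oSup : ∀ k, ∀ j ≤ k, g^[j] x ≤ oSup g x k := by
  intro k
  induction k with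
  | zero => intro j hj; interval_cases j; exact le_rfl
  | succ k ih =>
    intro j hj
    rcases Nat.lt_succ_iff_lt_or_eq.mp (Nat.lt_succ_of_le hj) with h | h
    · exact (ih j (Nat.lt_succ_iff.mp h)).trans le_sup_left
    · subst h; exact le_sup_right

lemma le_oInf : ∀ k, ∀ c : L, (∀ j ≤ k, c ≤ g^[j] x) → c ≤ oInf g x k := by
  intro k
  induction k with
  | zero => intro c h; exact h 0 le_rfl
  | succ k ih =>
    intro c h
    exact le_inf (ih c fun j hj => h j (hj.trans (Nat.le_succ k))) (h (k+1) le_rfl)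

lemma oSup_le : ∀ k, ∀ c : L, (∀ j ≤ k, g^[j] x ≤ c) → oSup g x k ≤ c := by
  intro k
  induction k with
  | zero => intro c h; exact h 0 le_rfl
  | succ k ih =>
    intro c h
    exact sup_le (ih c fun j hj => h j (hj.trans (Nat.le_succ k))) (h (k+1) le_rfl)

lemma le_g_oInf (hinf : ∀ x y : L, g (x ⊓ y) = g x ⊓ g y) :
    ∀ k, ∀ c : L, (∀ j ≤ k, c ≤ g^[j+1] x) → c ≤ g (oInf g x k) := by
  intro k
  induction k with
  | zero => intro c h; simpa [oInf] using h 0 le_rfl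
  | succ k ih =>
    intro c h
    have : g (oInf g x (k+1)) = g (oInf g x k) ⊓ g^[k+2] x := by
      rw [oInf, hinf, ← Function.iterate_succ_apply' g (k+1) x]
    rw [this]
    exact le_inf (ih c fun j hj => h j (hj.trans (Nat.le_succ k))) (h (k+1) le_rfl)

lemma g_oSup_le (hsup : ∀ x y : L, g (x ⊔ y) = g x ⊔ g y) :
    ∀ k, ∀ c : L, (∀ j ≤ k, g^[j+1] x ≤ c) → g (oSup g x k) ≤ c := by
  intro k
  induction k with
  | zero => intro c h; simpa [oSup] using h 0 le_rfl
  | succ k ih =>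
    intro c h
    have : g (oSup g x (k+1)) = g (oSup g x k) ⊔ g^[k+2] x := by
      rw [oSup, hsup, ← Function.iterate_succ_apply' g (k+1) x]
    rw [this]
    exact sup_le (ih c fun j hj => h j (hj.trans (Nat.le_succ k))) (h (k+1) le_rfl)

lemma iter_mem (M : Set L) (hMg : ∀ y ∈ M, g y ∈ M) (hx : x ∈ M) :
    ∀ k, g^[k] x ∈ M := by
  intro k
  induction k with
  | zero => exact hx
  | succ k ih => rw [Function.iterate_succ_apply']; exact hMg _ ih

lemma oInf_mem (M : Set L) (hMinf : ∀ a ∈ M, ∀ b ∈ M, a ⊓ b ∈ M)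
    (hMg : ∀ y ∈ M, g y ∈ M) (hx : x ∈ M) : ∀ k, oInf g x k ∈ M := by
  intro k
  induction k with
  | zero => exact hx
  | succ k ih => exact hMinf _ ih _ (iter_mem g x M hMg hx (k+1))

lemma oSup_mem (M : Set L) (hMsup : ∀ a ∈ M, ∀ b ∈ M, a ⊔ b ∈ M)
    (hMg : ∀ y ∈ M, g y ∈ M) (hx : x ∈ M) : ∀ k, oSup g x k ∈ M := by
  intro k
  induction k with
  | zero => exact hx
  | succ k ih => exact hMsup _ ih _ (iter_mem g x M hMg hx (k+1))

end Aux

/-- If `M` is a subalgebra of a subdirectly irreducible distributive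
rotational lattice `L` of order `n` on which `g` does not restrict to the identity,
then `M` contains the least and the greatest elements of `L` (which exist). -/
theorem stmt_3 {L : Type*} [DistribLattice L] (g : L → L)
    (hsup : ∀ x y : L, g (x ⊔ y) = g x ⊔ g y)
    (hinf : ∀ x y : L, g (x ⊓ y) = g x ⊓ g y)
    (hbij : Function.Bijective g)
    (n : ℕ) (hn : 0 < n) (hgn : g^[n] = id)
    (hmin : ∀ m : ℕ, 0 < m → m < n → g^[m] ≠ id)
    (hSI : SubdirectlyIrreducible g)
    (M : Set L)
    (hMsup : ∀ x ∈ M, ∀ y ∈ M, x ⊔ y ∈ M)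
    (hMinf : ∀ x ∈ M, ∀ y ∈ M, x ⊓ y ∈ M)
    (hMg : ∀ x ∈ M, g x ∈ M)
    (hnontriv : ∃ x ∈ M, g x ≠ x) :
    ∃ z ∈ M, ∃ o ∈ M, (∀ x : L, z ≤ x) ∧ (∀ x : L, x ≤ o) := by
  obtain ⟨x, hxM, hgx⟩ := hnontriv
  have hmono : Monotone g := by
    intro p q h
    have h1 : g p ⊓ g q = g p := by rw [← hinf, inf_of_le_left h]
    exact inf_eq_left.mp h1
  -- Key dichotomy: every fixed point of g is bottom or top.
  have key : ∀ a : L, g a = a → (∀ y, a ≤ y) ∨ (∀ y, y ≤ a) := by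
    intro a ha
    by_contra hcon
    push_neg at hcon
    obtain ⟨⟨w1, hw1⟩, ⟨w2, hw2⟩⟩ := hcon
    obtain ⟨μ, hμc, hμne, hμle⟩ := hSI
    -- θ : p ⊔ a = q ⊔ a
    have hθ : IsCongruence g (fun p q => p ⊔ a = q ⊔ a) := by
      refine ⟨⟨fun _ => rfl, fun h => h.symm, fun h1 h2 => h1.trans h2⟩, ?_, ?_, ?_⟩
      · intro x₁ y₁ x₂ y₂ h1 h2
        calc (x₁ ⊔ x₂) ⊔ a = (x₁ ⊔ a) ⊔ (x₂ ⊔ a) := by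
              rw [sup_sup_sup_comm, sup_idem]
          _ = (y₁ ⊔ a) ⊔ (y₂ ⊔ a) := by rw [h1, h2]
          _ = (y₁ ⊔ y₂) ⊔ a := by rw [sup_sup_sup_comm, sup_idem]
      · intro x₁ y₁ x₂ y₂ h1 h2
        calc (x₁ ⊓ x₂) ⊔ a = (x₁ ⊔ a) ⊓ (x₂ ⊔ a) := by rw [sup_inf_right]
          _ = (y₁ ⊔ a) ⊓ (y₂ ⊔ a) := by rw [h1, h2]
          _ = (y₁ ⊓ y₂) ⊔ a := by rw [sup_inf_right]
      · intro p q h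
        calc g p ⊔ a = g (p ⊔ a) := by rw [hsup, ha]
          _ = g (q ⊔ a) := by rw [h]
          _ = g q ⊔ a := by rw [hsup, ha]
    have hθne : (fun p q : L => p ⊔ a = q ⊔ a) ≠ (· = ·) := by
      intro hcontra
      have h2 : (fun p q : L => p ⊔ a = q ⊔ a) w1 (w1 ⊔ a) := by
        show w1 ⊔ a = (w1 ⊔ a) ⊔ a
        rw [sup_assoc, sup_idem]
      rw [hcontra] at h2
      exact hw1 (h2 ▸ le_sup_right)
    -- η : p ⊓ a = q ⊓ a
    have hη : IsCongruence g (fun p q => p ⊓ a = q ⊓ a) := by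
      refine ⟨⟨fun _ => rfl, fun h => h.symm, fun h1 h2 => h1.trans h2⟩, ?_, ?_, ?_⟩
      · intro x₁ y₁ x₂ y₂ h1 h2
        calc (x₁ ⊔ x₂) ⊓ a = (x₁ ⊓ a) ⊔ (x₂ ⊓ a) := by rw [inf_sup_right]
          _ = (y₁ ⊓ a) ⊔ (y₂ ⊓ a) := by rw [h1, h2]
          _ = (y₁ ⊔ y₂) ⊓ a := by rw [inf_sup_right]
      · intro x₁ y₁ x₂ y₂ h1 h2
        calc (x₁ ⊓ x₂) ⊓ a = (x₁ ⊓ a) ⊓ (x₂ ⊓ a) := by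
              rw [inf_inf_inf_comm, inf_idem]
          _ = (y₁ ⊓ a) ⊓ (y₂ ⊓ a) := by rw [h1, h2]
          _ = (y₁ ⊓ y₂) ⊓ a := by rw [inf_inf_inf_comm, inf_idem]
      · intro p q h
        calc g p ⊓ a = g (p ⊓ a) := by rw [hinf, ha]
          _ = g (q ⊓ a) := by rw [h]
          _ = g q ⊓ a := by rw [hinf, ha]
    have hηne : (fun p q : L => p ⊓ a = q ⊓ a) ≠ (· = ·) := by
      intro hcontra
      have h2 : (fun p q : L => p ⊓ a = q ⊓ a) w2 (w2 ⊓ a) := by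
        show w2 ⊓ a = (w2 ⊓ a) ⊓ a
        rw [inf_assoc, inf_idem]
      rw [hcontra] at h2
      exact hw2 (h2 ▸ inf_le_right)
    -- extract a nontrivial μ-pair
    have hwit : ∃ u v : L, μ u v ∧ u ≠ v := by
      by_contra h'
      push_neg at h'
      apply hμne
      funext u v
      exact propext ⟨fun h => h' u v h, fun h => h ▸ hμc.1.refl u⟩
    obtain ⟨u, v, huv, hne⟩ := hwit
    exact hne (eq_of_inf_eq_sup_eq (hμle _ hη hηne u v huv) (hμle _ hθ hθne u v huv))
  obtain ⟨n', rfl⟩ : ∃ n', n = n' + 1 := ⟨n - 1, (Nat.succ_pred_eq_of_pos hn).symm⟩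
  -- the meet of the orbit
  set a := oInf g x n' with ha_def
  have haM : a ∈ M := oInf_mem g x M hMinf hMg hxM n'
  have hax : a ≤ x := oInf_le g x n' 0 (Nat.zero_le _)
  have hid : g^[n'+1] x = x := by rw [hgn]; rfl
  have hgafix : g a = a := by
    apply le_antisymm
    · apply le_oInf
      intro j hj
      rcases j with _ | j
      · have := hmono (oInf_le g x n' n' le_rfl)
        rw [← Function.iterate_succ_apply' g n' x, hid] at this
        simpa using this
      · have := hmono (oInf_le g x n' j (by omega))
        rwa [← Function.iterate_succ_apply' g j x] at this
    · apply le_g_oInf g x hinf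
      intro j hj
      rcases Nat.lt_succ_iff_lt_or_eq.mp (Nat.lt_succ_of_le hj) with h | h
      · exact oInf_le g x n' (j+1) h
      · rw [h, hid]; exact hax
  -- the join of the orbit
  set b := oSup g x n' with hb_def
  have hbM : b ∈ M := oSup_mem g x M hMsup hMg hxM n'
  have hxb : x ≤ b := le_oSup g x n' 0 (Nat.zero_le _)
  have hgbfix : g b = b := by
    apply le_antisymm
    · apply g_oSup_le g x hsup
      intro j hj
      rcases Nat.lt_succ_iff_lt_or_eq.mp (Nat.lt_succ_of_le hj) with h | h
      · exact le_oSup g x n' (j+1) h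
      · rw [h, hid]; exact hxb
    · apply oSup_le
      intro j hj
      rcases j with _ | j
      · have := hmono (le_oSup g x n' n' le_rfl)
        rw [← Function.iterate_succ_apply' g n' x, hid] at this
        simpa using this
      · have := hmono (le_oSup g x n' j (by omega))
        rwa [← Function.iterate_succ_apply' g j x] at this
  -- a is not top, so a is bottom
  have habot : ∀ y, a ≤ y := by
    rcases key a hgafix with h | h
    · exact h
    · exfalso
      have : x = a := le_antisymm (h x) hax
      exact hgx (by rw [this, hgafix])
  have hbtop : ∀ y, y ≤ b := by
    rcases key b hgbfix with h | h
    · exfalso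
      have : x = b := le_antisymm hxb (h x)
      exact hgx (by rw [this, hgbfix])
    · exact h
  exact ⟨a, haM, b, hbM, habot, hbtop⟩
end

section
/- Let B be a boolean sublattice of a finite distributive lattice L with 0_B = 0_L and 1_B = 1_L. Then the length (height) of L equals the sum over all atoms a of B of the height h(a) of a in L. -/
/-!
By Birkhoff's representation, `L` is the lattice of lower sets of its poset of sup-irreducible
elements, so the height of `x` is the number of sup-irreducibles below `x`; in particular height
is additive on disjoint joins. The atoms of `B` are pairwise disjoint, and they join to `⊤`,
since the complement in `B` of their join contains no atom of `B` and so is `⊥`.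
-/

open Order

namespace LowerSet

variable {α : Type*} [PartialOrder α] [Finite α]

lemma ncard_strictMono : StrictMono fun s : LowerSet α ↦ (s : Set α).ncard :=
  fun _ _ hst ↦ Set.ncard_lt_ncard (coe_ssubset_coe.2 hst)

lemma ncard_erase_add_one {s : LowerSet α} {a : α} (ha : Maximal (· ∈ s) a) :
    (s.erase a : Set α).ncard + 1 = (s : Set α).ncard := by
  have hcoe : (s.erase a : Set α) = (s : Set α) \ {a} := by
    ext b
    simp only [coe_erase, Set.mem_sdiff, UpperSet.coe_Ici, Set.mem_Ici, Set.mem_singleton_iff,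
      SetLike.mem_coe]
    exact and_congr_right fun hb ↦ not_congr ⟨fun hab ↦ ha.eq_of_ge hb hab, ge_of_eq⟩
  rw [hcoe, Set.ncard_sdiff_singleton_add_one ha.prop]

lemma exists_le_ncard_eq (s : LowerSet α) {n : ℕ} (hn : n ≤ (s : Set α).ncard) :
    ∃ t ≤ s, (t : Set α).ncard = n := by
  obtain ⟨m, hm⟩ := Nat.exists_eq_add_of_le hn
  clear hn
  induction m generalizing s with
  | zero => exact ⟨s, le_rfl, by omega⟩
  | succ m ih =>
    obtain ⟨a, ha⟩ := (s : Set α).toFinite.exists_maximal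
      (Set.nonempty_of_ncard_ne_zero (by omega))
    obtain ⟨t, hts, ht⟩ := ih (s.erase a) (by have := ncard_erase_add_one ha; omega)
    exact ⟨t, hts.trans erase_le, ht⟩

lemma height_eq_ncard (s : LowerSet α) : height s = (s : Set α).ncard := by
  refine (height_eq_of_strictMono _ ncard_strictMono (fun s n hn ↦ ?_) s).trans (height_nat _)
  obtain ⟨t, hts, ht⟩ := exists_le_ncard_eq s hn.le
  exact ⟨t, hts.lt_of_ne (by rintro rfl; omega), ht⟩

end LowerSet

section DistribLattice

variable {L : Type*} [DistribLattice L] [OrderBot L] [Fintype L]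

lemma height_sup_of_disjoint {x y : L} (h : Disjoint x y) :
    height (x ⊔ y) = height x + height y := by
  classical
  let φ := OrderIso.lowerSetSupIrred (α := L)
  have hφ : Disjoint (φ x : Set {a : L // SupIrred a}) (φ y) := by
    rw [Set.disjoint_iff_inter_eq_empty, ← LowerSet.coe_inf, (h.map_orderIso φ).eq_bot,
      LowerSet.coe_bot]
  rw [← height_orderIso φ, ← height_orderIso φ x, ← height_orderIso φ y, map_sup,
    LowerSet.height_eq_ncard, LowerSet.height_eq_ncard, LowerSet.height_eq_ncard,
    LowerSet.coe_sup, Set.ncard_union_eq hφ, Nat.cast_add]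

lemma height_finset_sup_eq_sum {s : Finset L} (hs : (s : Set L).PairwiseDisjoint id) :
    height (s.sup id) = ∑ a ∈ s, height a := by
  classical
  induction s using Finset.induction_on with
  | empty => simp
  | insert a s ha ih =>
    rw [Finset.coe_insert, Set.pairwiseDisjoint_insert] at hs
    rw [Finset.sup_insert, Finset.sum_insert ha, id, height_sup_of_disjoint, ih hs.1]
    exact Finset.disjoint_sup_right.2 fun b hb ↦ hs.2 b hb (ne_of_mem_of_not_mem hb ha).symm

end DistribLattice

section Atoms

variable {L : Type*} [Lattice L] {B : Set L}

def atomsIn [OrderBot L] (B : Set L) : Set L := {x | x ∈ B ∧ x ≠ ⊥ ∧ ∀ y ∈ B, y < x → y = ⊥}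

lemma pairwiseDisjoint_atomsIn [OrderBot L] (hBinf : ∀ x ∈ B, ∀ y ∈ B, x ⊓ y ∈ B) :
    (atomsIn B).PairwiseDisjoint id := by
  rintro a ⟨haB, ha0, hamin⟩ b ⟨hbB, -, hbmin⟩ hab
  rw [Function.onFun, id, id, disjoint_iff]
  refine (inf_le_left.lt_or_eq).elim (hamin _ (hBinf a haB b hbB)) fun h ↦ absurd ?_ ha0
  exact hbmin a haB ((h ▸ inf_le_right : a ≤ b).lt_of_ne hab)

lemma exists_mem_atomsIn_le [OrderBot L] [Finite L] {b : L} (hb : b ∈ B) (hb0 : b ≠ ⊥) :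
    ∃ a ∈ atomsIn B, a ≤ b := by
  obtain ⟨a, hab, ⟨haB, ha0⟩, hamin⟩ :=
    exists_minimal_le_of_wellFoundedLT (fun x ↦ x ∈ B ∧ x ≠ ⊥) b ⟨hb, hb0⟩
  refine ⟨a, ⟨haB, ha0, fun y hyB hya ↦ ?_⟩, hab⟩
  by_contra hy0
  exact hya.not_ge (hamin ⟨hyB, hy0⟩ hya.le)

lemma finset_sup_atomsIn_eq_top [BoundedOrder L] [Finite L] (hBsup : ∀ x ∈ B, ∀ y ∈ B, x ⊔ y ∈ B)
    (hbot : ⊥ ∈ B) (hcompl : ∀ x ∈ B, ∃ y ∈ B, x ⊔ y = ⊤ ∧ x ⊓ y = ⊥) :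
    (Set.toFinite (atomsIn B)).toFinset.sup id = ⊤ := by
  set A := (Set.toFinite (atomsIn B)).toFinset
  have hAB : A.sup id ∈ B :=
    Finset.sup_mem B hbot hBsup A id fun a ha ↦ ((Set.Finite.mem_toFinset _).1 ha).1
  obtain ⟨c, hcB, hsup, hinf⟩ := hcompl _ hAB
  suffices hc : c = ⊥ by rwa [hc, sup_bot_eq] at hsup
  by_contra hc0
  obtain ⟨a, ha, hac⟩ := exists_mem_atomsIn_le hcB hc0
  have haA : a ≤ A.sup id := Finset.le_sup (f := id) ((Set.Finite.mem_toFinset _).2 ha)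
  exact ha.2.1 (le_bot_iff.1 (hinf ▸ le_inf haA hac))

end Atoms

theorem stmt_7_general {L : Type*} [DistribLattice L] [BoundedOrder L] [Fintype L]
    (B : Set L)
    (hBsup : ∀ x ∈ B, ∀ y ∈ B, x ⊔ y ∈ B)
    (hBinf : ∀ x ∈ B, ∀ y ∈ B, x ⊓ y ∈ B)
    (hbot : ⊥ ∈ B)
    (hcompl : ∀ x ∈ B, ∃ y ∈ B, x ⊔ y = ⊤ ∧ x ⊓ y = ⊥) :
    Order.height (⊤ : L) =
      ∑ x ∈ (Set.toFinite {x : L | x ∈ B ∧ x ≠ ⊥ ∧ ∀ y ∈ B, y < x → y = ⊥}).toFinset,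
        Order.height x := by
  change height ⊤ = ∑ x ∈ (Set.toFinite (atomsIn B)).toFinset, height x
  rw [← finset_sup_atomsIn_eq_top hBsup hbot hcompl]
  refine height_finset_sup_eq_sum ?_
  rw [Set.Finite.coe_toFinset]
  exact pairwiseDisjoint_atomsIn hBinf

/-- If `B` is a Boolean sublattice of a finite distributive lattice `L`
spanning `L` (i.e. `⊥ ∈ B` and `⊤ ∈ B`, and every element of `B` has a complement
in `B`), then the length of `L` (the height of `⊤`) equals the sum of the heights
of the atoms of `B`. -/
theorem stmt_7 {L : Type*} [DistribLattice L] [BoundedOrder L] [Fintype L]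
    (B : Set L)
    (hBsup : ∀ x ∈ B, ∀ y ∈ B, x ⊔ y ∈ B)
    (hBinf : ∀ x ∈ B, ∀ y ∈ B, x ⊓ y ∈ B)
    (hbot : ⊥ ∈ B) (htop : ⊤ ∈ B)
    (hcompl : ∀ x ∈ B, ∃ y ∈ B, x ⊔ y = ⊤ ∧ x ⊓ y = ⊥) :
    Order.height (⊤ : L) =
      ∑ x ∈ (Set.toFinite {x : L | x ∈ B ∧ x ≠ ⊥ ∧ ∀ y ∈ B, y < x → y = ⊥}).toFinset,
        Order.height x :=
  stmt_7_general B hBsup hBinf hbot hcompl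
end

section
/- For each n ≥ 1, the n-dimensional rotational cube 𝔅_n (the Boolean lattice of all subsets of Z/nZ with the automorphism induced by the cyclic shift i ↦ i+1) is a simple algebra: its only congruences (equivalence relations compatible with ∨, ∧, and the shift map) are the equality relation and the full relation. -/
/-- The shift automorphism of the rotational cube `𝔅_n`: the map on the powerset
lattice of `ZMod n` induced by `i ↦ i + 1`. -/
def cubeShift (n : ℕ) : Set (ZMod n) → Set (ZMod n) :=
  fun S => (· + 1) '' S

/-- For `n ≥ 1`, the `n`-dimensional rotational cube `𝔅_n` is simple:
every equivalence relation on `Set (ZMod n)` compatible with `∪`, `∩` and the shift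
is either equality or the full relation. -/
theorem stmt_8 (n : ℕ) (hn : 0 < n)
    (r : Set (ZMod n) → Set (ZMod n) → Prop)
    (hequiv : Equivalence r)
    (hsup : ∀ x₁ y₁ x₂ y₂, r x₁ y₁ → r x₂ y₂ → r (x₁ ∪ x₂) (y₁ ∪ y₂))
    (hinf : ∀ x₁ y₁ x₂ y₂, r x₁ y₁ → r x₂ y₂ → r (x₁ ∩ x₂) (y₁ ∩ y₂))
    (hg : ∀ x y, r x y → r (cubeShift n x) (cubeShift n y)) :
    (∀ x y, r x y ↔ x = y) ∨ (∀ x y, r x y) := by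
  classical
  haveI : NeZero n := ⟨hn.ne'⟩
  by_cases htriv : ∀ x y, r x y → x = y
  · left
    intro x y
    exact ⟨htriv x y, fun h => h ▸ hequiv.refl x⟩
  · right
    push_neg at htriv
    obtain ⟨x, y, hxy, hne⟩ := htriv
    -- r (x ∩ y) (x ∪ y)
    have h1 : r (x ∩ y) y := by
      have := hinf x y y y hxy (hequiv.refl y)
      simpa using this
    have h2 : r (x ∪ y) y := by
      have := hsup x y y y hxy (hequiv.refl y)
      simpa using this
    have h3 : r (x ∩ y) (x ∪ y) := hequiv.trans h1 (hequiv.symm h2)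
    -- pick i ∈ (x ∪ y) \ (x ∩ y)
    have hss : ¬ (x ∪ y ⊆ x ∩ y) := by
      intro h
      apply hne
      apply Set.Subset.antisymm
      · intro a ha; exact (h (Or.inl ha)).2
      · intro a ha; exact (h (Or.inr ha)).1
    obtain ⟨i, hiu, hii⟩ := Set.not_subset.mp hss
    -- r ∅ {i}
    have h4 : r ((x ∩ y) ∩ {i}) ((x ∪ y) ∩ {i}) :=
      hinf _ _ _ _ h3 (hequiv.refl {i})
    have e1 : (x ∩ y) ∩ {i} = (∅ : Set (ZMod n)) := by
      ext a; simp only [Set.mem_inter_iff, Set.mem_singleton_iff, Set.mem_empty_iff_false,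
        iff_false]
      rintro ⟨ha, rfl⟩; exact hii ha
    have e2 : (x ∪ y) ∩ {i} = ({i} : Set (ZMod n)) := by
      ext a; simp only [Set.mem_inter_iff, Set.mem_singleton_iff]
      constructor
      · rintro ⟨_, rfl⟩; rfl
      · rintro rfl; exact ⟨hiu, rfl⟩
    rw [e1, e2] at h4
    -- shifting singletons
    have hshift_empty : cubeShift n (∅ : Set (ZMod n)) = ∅ := by
      simp [cubeShift]
    have hshift_single : ∀ a : ZMod n, cubeShift n {a} = {a + 1} := by
      intro a; simp [cubeShift]
    have h5 : ∀ k : ℕ, r ∅ {i + (k : ZMod n)} := by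
      intro k
      induction k with
      | zero => simpa using h4
      | succ m ih =>
        have := hg _ _ ih
        rw [hshift_empty, hshift_single] at this
        have : r ∅ {i + (m : ZMod n) + 1} := this
        convert this using 2
        push_cast
        ring
    have h6 : ∀ j : ZMod n, r ∅ {j} := by
      intro j
      have := h5 (j - i).val
      rwa [ZMod.natCast_val, ZMod.cast_id, add_sub_cancel] at this
    -- r ∅ s for any finset
    have h7 : ∀ t : Finset (ZMod n), r ∅ (↑t : Set (ZMod n)) := by
      intro t
      induction t using Finset.induction with
      | empty => simpa using hequiv.refl ∅
      | @insert a s ha ih =>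
        have := hsup _ _ _ _ (h6 a) ih
        simp only [Set.empty_union] at this ⊢
        rw [Finset.coe_insert, Set.insert_eq]
        simpa using this
    have h8 : r ∅ Set.univ := by
      have := h7 Finset.univ
      simpa using this
    intro a b
    have ha : r a Set.univ := by
      have := hsup a a ∅ Set.univ (hequiv.refl a) h8
      simpa using this
    have hb : r b Set.univ := by
      have := hsup b b ∅ Set.univ (hequiv.refl b) h8
      simpa using this
    exact hequiv.trans ha (hequiv.symm hb)
end

section
/- Let L be a subdirectly irreducible distributive rotational lattice and a ∈ L a non-stable element (g(a) ≠ a) whose orbit {g^i(a) : i ≥ 0} has exactly n elements. Then the subalgebra of L generated by {a} is isomorphic (as a rotational lattice) to the n-dimensional rotational cube 𝔅_n. -/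
/-- The subalgebra generated by `S`. -/
def genSub {L : Type*} [Lattice L] (g : L → L) (S : Set L) : Set L :=
  ⋂₀ {T : Set L | S ⊆ T ∧ (∀ x ∈ T, ∀ y ∈ T, x ⊔ y ∈ T) ∧
      (∀ x ∈ T, ∀ y ∈ T, x ⊓ y ∈ T) ∧ (∀ x ∈ T, g x ∈ T)}

open Function Order

section Translates

variable {G : Type*} [AddCommGroup G] [Finite G]

theorem image_add_right_subset_iff_eq {A : Set G} {d : G} :
    (· + d) '' A ⊆ A ↔ (· + d) '' A = A :=
  ⟨fun h => Set.eq_of_subset_of_ncard_le h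
      (Set.ncard_image_of_injective A (add_left_injective d)).ge A.toFinite,
    fun h => h.subset⟩

theorem eq_univ_of_translates_mem [Nontrivial G] {E : Set (Set G)} (hsup : SupClosed E)
    (hinf : InfClosed E) {A : Set G} (htrans : ∀ d, (· + d) '' A ∈ E)
    (hA : ∀ d, (· + d) '' A = A → d = 0) : E = Set.univ := by
  have hA_ne : A.Nonempty := by
    obtain ⟨d, hd⟩ := exists_ne (0 : G)
    by_contra h
    exact hd (hA d (by simp [Set.not_nonempty_iff_eq_empty.1 h]))
  have hsingleton : ∀ i : G, {i} ∈ E := by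
    intro i
    have hi : {i} = ⋂ s ∈ A, (· + (i - s)) '' A := by
      ext j
      simp only [Set.mem_singleton_iff, Set.mem_iInter, Set.image_add_right, Set.mem_preimage]
      refine ⟨?_, fun hj => ?_⟩
      · rintro rfl s hs
        simpa using hs
      · have hjA : (· + (j - i)) '' A ⊆ A := by
          rw [Set.image_add_right]
          intro s hs
          convert hj _ hs using 1
          beta_reduce; abel
        exact sub_eq_zero.1 (hA _ (image_add_right_subset_iff_eq.1 hjA))
    rw [hi]
    exact hinf.biInf_mem_of_nonempty A.toFinite hA_ne fun s _ => htrans _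
  have hempty : ∅ ∈ E := by
    obtain ⟨i, j, hij⟩ := exists_pair_ne G
    have hdisj : ({i} ∩ {j} : Set G) = ∅ := Set.singleton_inter_eq_empty.2 hij
    rw [← hdisj]
    exact hinf (hsingleton i) (hsingleton j)
  refine Set.eq_univ_of_forall fun S => ?_
  rw [← Set.biUnion_of_singleton S]
  exact hsup.biSup_mem S.toFinite hempty fun i _ => hsingleton i

end Translates

section GenSub

variable {L : Type*} [Lattice L] {g : L → L} {S T : Set L}

theorem subset_genSub : S ⊆ genSub g S :=
  fun _ hx => Set.mem_sInter.2 fun _ hT => hT.1 hx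

theorem supClosed_genSub : SupClosed (genSub g S) := fun _ hx _ hy =>
  Set.mem_sInter.2 fun T hT => hT.2.1 _ (Set.mem_sInter.1 hx T hT) _ (Set.mem_sInter.1 hy T hT)

theorem infClosed_genSub : InfClosed (genSub g S) := fun _ hx _ hy =>
  Set.mem_sInter.2 fun T hT => hT.2.2.1 _ (Set.mem_sInter.1 hx T hT) _ (Set.mem_sInter.1 hy T hT)

theorem mapsTo_genSub : Set.MapsTo g (genSub g S) (genSub g S) := fun _ hx =>
  Set.mem_sInter.2 fun T hT => hT.2.2.2 _ (Set.mem_sInter.1 hx T hT)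

theorem genSub_subset (hST : S ⊆ T) (hsup : SupClosed T) (hinf : InfClosed T)
    (hg : Set.MapsTo g T T) : genSub g S ⊆ T :=
  Set.sInter_subset_of_mem ⟨hST, fun _ hx _ hy => hsup hx hy, fun _ hx _ hy => hinf hx hy,
    fun _ hx => hg hx⟩

theorem isPeriodicPt_of_mem_genSub (hsup : ∀ x y : L, g (x ⊔ y) = g x ⊔ g y)
    (hinf : ∀ x y : L, g (x ⊓ y) = g x ⊓ g y) {n : ℕ} (hS : ∀ a ∈ S, IsPeriodicPt g n a) :
    ∀ x ∈ genSub g S, IsPeriodicPt g n x :=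
  genSub_subset (T := {x | IsPeriodicPt g n x}) hS
    (fun x hx y hy => (Semiconj₂.iterate hsup n x y).trans (by rw [hx.eq, hy.eq]))
    (fun x hx y hy => (Semiconj₂.iterate hinf n x y).trans (by rw [hx.eq, hy.eq]))
    (fun _ hx => IsPeriodicPt.apply hx)

end GenSub

section Periodic

variable {α : Type*} {f : α → α} {x : α}

theorem ncard_range_iterate (hx : x ∈ periodicPts f) :
    (Set.range fun i => f^[i] x).ncard = minimalPeriod f x := by
  have hrange : (Set.range fun i => f^[i] x) = (fun i => f^[i] x) '' Set.Iio (minimalPeriod f x) :=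
    le_antisymm
      (Set.range_subset_iff.2 fun i => ⟨_, Nat.mod_lt i (minimalPeriod_pos_of_mem_periodicPts hx),
        iterate_mod_minimalPeriod_eq⟩)
      (Set.image_subset_range _ _)
  rw [hrange, iterate_injOn_Iio_minimalPeriod.ncard_image, Set.ncard_Iio_nat]

theorem Function.IsPeriodicPt.iterate_eq_of_natCast_eq {n j k : ℕ} (hx : IsPeriodicPt f n x)
    (hjk : (j : ZMod n) = k) : f^[j] x = f^[k] x := by
  rw [← hx.iterate_mod_apply, ← hx.iterate_mod_apply k, (ZMod.natCast_eq_natCast_iff' j k n).1 hjk]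

end Periodic

section PrimeIdeal

variable {L : Type*} [DistribLattice L]

theorem Order.Ideal.IsPrime.inf_mem_iff {J : Ideal L} (hJ : J.IsPrime) {x y : L} :
    x ⊓ y ∈ J ↔ x ∈ J ∨ y ∈ J :=
  ⟨hJ.mem_or_mem, fun h => h.elim (J.lower inf_le_left) (J.lower inf_le_right)⟩

theorem Order.Ideal.exists_isPrime_of_not_le {c d : L} (h : ¬c ≤ d) :
    ∃ J : Ideal L, J.IsPrime ∧ d ∈ J ∧ c ∉ J := by
  have hdisj : Disjoint (PFilter.principal c : Set L) (Ideal.principal d : Set L) :=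
    Set.disjoint_left.2 fun _ hc hd => h (le_trans hc hd)
  obtain ⟨J, hJ, hdJ, hcJ⟩ := DistribLattice.prime_ideal_of_disjoint_filter_ideal hdisj
  exact ⟨J, hJ, hdJ Ideal.mem_principal_self,
    Set.disjoint_left.1 hcJ (PFilter.mem_principal.2 le_rfl)⟩

end PrimeIdeal

section Representation

variable {L : Type*} {g : L → L}

def orbitTrace (g : L → L) (J : Set L) (x y : L) : Prop :=
  ∀ k : ℕ, g^[k] x ∈ J ↔ g^[k] y ∈ J

/-- Indexing by `-i` makes `g` act as the shift `i ↦ i + 1`. -/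
def cubeRep (g : L → L) (J : Set L) (n : ℕ) (x : L) : Set (ZMod n) :=
  {i | g^[(-i).val] x ∉ J}

variable {J : Set L} {n : ℕ} [NeZero n]

theorem cubeRep_iterate {x : L} (hx : IsPeriodicPt g n x) (k : ℕ) :
    cubeRep g J n (g^[k] x) = (· + (k : ZMod n)) '' cubeRep g J n x := by
  ext i
  simp only [cubeRep, Set.image_add_right, Set.mem_preimage, Set.mem_ofPred_eq,
    ← iterate_add_apply]
  rw [hx.iterate_eq_of_natCast_eq (k := (-(i + -k)).val)]
  simp only [Nat.cast_add, ZMod.natCast_zmod_val]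
  abel

theorem cubeRep_injOn (hJ : ∀ x y, orbitTrace g J x y → x = y) :
    Set.InjOn (cubeRep g J n) {x | IsPeriodicPt g n x} := by
  intro x hx y hy hxy
  refine hJ x y fun k => ?_
  have hk : ∀ z : L, IsPeriodicPt g n z → (-(k : ZMod n) ∈ cubeRep g J n z ↔ g^[k] z ∉ J) :=
    fun z hz => by
      rw [cubeRep, Set.mem_ofPred_eq, neg_neg,
        hz.iterate_eq_of_natCast_eq (ZMod.natCast_zmod_val (k : ZMod n))]
  exact not_iff_not.1 ((hk x hx).symm.trans ((Set.ext_iff.1 hxy _).trans (hk y hy)))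

end Representation

section Congruence

variable {L : Type*} [DistribLattice L] {g : L → L}

theorem isCongruence_orbitTrace (hsup : ∀ x y : L, g (x ⊔ y) = g x ⊔ g y)
    (hinf : ∀ x y : L, g (x ⊓ y) = g x ⊓ g y) (J : Ideal L) [hJ : J.IsPrime] :
    IsCongruence g (orbitTrace g J) := by
  refine ⟨⟨fun _ _ => Iff.rfl, fun h k => (h k).symm, fun h₁ h₂ k => (h₁ k).trans (h₂ k)⟩,
    fun x₁ y₁ x₂ y₂ h₁ h₂ k => ?_, fun x₁ y₁ x₂ y₂ h₁ h₂ k => ?_, fun x y h k => ?_⟩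
  · rw [Semiconj₂.iterate hsup, Semiconj₂.iterate hsup, SetLike.mem_coe, SetLike.mem_coe,
      Ideal.sup_mem_iff, Ideal.sup_mem_iff]
    exact and_congr (h₁ k) (h₂ k)
  · rw [Semiconj₂.iterate hinf, Semiconj₂.iterate hinf, SetLike.mem_coe, SetLike.mem_coe,
      hJ.inf_mem_iff, hJ.inf_mem_iff]
    exact or_congr (h₁ k) (h₂ k)
  · simpa only [← iterate_succ_apply] using h (k + 1)

theorem SubdirectlyIrreducible.exists_isPrime_orbitTrace_eq
    (hsup : ∀ x y : L, g (x ⊔ y) = g x ⊔ g y) (hinf : ∀ x y : L, g (x ⊓ y) = g x ⊓ g y)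
    (hSI : SubdirectlyIrreducible g) :
    ∃ J : Ideal L, J.IsPrime ∧ ∀ x y, orbitTrace g J x y → x = y := by
  obtain ⟨μ, hμ, hμ_ne, hμ_min⟩ := hSI
  obtain ⟨c, d, hcd, hμcd⟩ : ∃ c d, c ≠ d ∧ μ c d := by
    by_contra! h
    exact hμ_ne (funext₂ fun x y =>
      propext ⟨fun hμxy => by_contra fun hne => h x y hne hμxy, fun hxy => hxy ▸ hμ.1.refl x⟩)
  obtain ⟨c, d, hcd, hμcd⟩ : ∃ c d, ¬c ≤ d ∧ μ c d := by
    by_cases hle : c ≤ d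
    · exact ⟨d, c, fun h => hcd (le_antisymm hle h), hμ.1.symm hμcd⟩
    · exact ⟨c, d, hle, hμcd⟩
  obtain ⟨J, hJ, hdJ, hcJ⟩ := Ideal.exists_isPrime_of_not_le hcd
  refine ⟨J, hJ, fun x y hxy => of_not_not fun hne => ?_⟩
  have htrace_ne : orbitTrace g J ≠ (· = ·) := fun h => hne ((congrFun₂ h x y).mp hxy)
  exact hcJ ((hμ_min _ (isCongruence_orbitTrace hsup hinf J) htrace_ne c d hμcd 0).2 hdJ)

variable {n : ℕ}

theorem cubeRep_sup (hsup : ∀ x y : L, g (x ⊔ y) = g x ⊔ g y) (J : Ideal L) (x y : L) :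
    cubeRep g J n (x ⊔ y) = cubeRep g J n x ∪ cubeRep g J n y := by
  ext i
  simp only [cubeRep, Set.mem_ofPred_eq, Set.mem_union, Semiconj₂.iterate hsup _ x y,
    SetLike.mem_coe, Ideal.sup_mem_iff, not_and_or]

theorem cubeRep_inf (hinf : ∀ x y : L, g (x ⊓ y) = g x ⊓ g y) (J : Ideal L) [hJ : J.IsPrime]
    (x y : L) : cubeRep g J n (x ⊓ y) = cubeRep g J n x ∩ cubeRep g J n y := by
  ext i
  simp only [cubeRep, Set.mem_ofPred_eq, Set.mem_inter_iff, Semiconj₂.iterate hinf _ x y,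
    SetLike.mem_coe, hJ.inf_mem_iff, not_or]

end Congruence

theorem stmt_9_general {L : Type*} [DistribLattice L] (g : L → L)
    (hsup : ∀ x y : L, g (x ⊔ y) = g x ⊔ g y)
    (hinf : ∀ x y : L, g (x ⊓ y) = g x ⊓ g y)
    (hord : ∃ m : ℕ, 0 < m ∧ g^[m] = id)
    (hSI : SubdirectlyIrreducible g)
    (a : L) (ha : g a ≠ a)
    (n : ℕ) (horb : (Set.range fun i : ℕ => g^[i] a).ncard = n) :
    ∃ f : L → Set (ZMod n),
      Set.BijOn f (genSub g {a}) Set.univ ∧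
      (∀ x ∈ genSub g {a}, ∀ y ∈ genSub g {a},
        f (x ⊔ y) = f x ∪ f y ∧ f (x ⊓ y) = f x ∩ f y) ∧
      (∀ x ∈ genSub g {a}, f (g x) = (· + 1) '' f x) := by
  obtain ⟨J, hJ, hsep⟩ := hSI.exists_isPrime_orbitTrace_eq hsup hinf
  obtain ⟨m, hm, hgm⟩ := hord
  have ha_mem : a ∈ periodicPts g := ⟨m, hm, congrFun hgm a⟩
  obtain rfl : minimalPeriod g a = n := (ncard_range_iterate ha_mem).symm.trans horb
  have ha_per : IsPeriodicPt g (minimalPeriod g a) a := isPeriodicPt_minimalPeriod g a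
  have hpos := minimalPeriod_pos_of_mem_periodicPts ha_mem
  have : NeZero (minimalPeriod g a) := ⟨hpos.ne'⟩
  have : Fact (1 < minimalPeriod g a) :=
    ⟨lt_of_le_of_ne hpos fun h => ha (minimalPeriod_eq_one_iff_isFixedPt.1 h.symm)⟩
  set n := minimalPeriod g a
  set D := genSub g {a}
  have hper : ∀ x ∈ D, IsPeriodicPt g n x :=
    isPeriodicPt_of_mem_genSub hsup hinf (by simpa using ha_per)
  have horbit : ∀ k : ℕ, g^[k] a ∈ D := fun k => mapsTo_genSub.iterate k (subset_genSub rfl)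
  have hinj : Set.InjOn (cubeRep g J n) D := (cubeRep_injOn hsep).mono hper
  have hsurj : cubeRep g J n '' D = Set.univ := by
    refine eq_univ_of_translates_mem
      (supClosed_genSub.image (⟨cubeRep g J n, cubeRep_sup hsup J⟩ : SupHom L (Set (ZMod n))))
      (infClosed_genSub.image (⟨cubeRep g J n, cubeRep_inf hinf J⟩ : InfHom L (Set (ZMod n))))
      (A := cubeRep g J n a) (fun d => ⟨g^[d.val] a, horbit _, ?_⟩) fun d hd => ?_
    · rw [cubeRep_iterate ha_per, ZMod.natCast_zmod_val]
    · have hfix : IsPeriodicPt g d.val a :=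
        hinj (horbit _) (horbit 0) (by rwa [cubeRep_iterate ha_per, ZMod.natCast_zmod_val])
      exact (ZMod.val_eq_zero d).1 (Nat.eq_zero_of_dvd_of_lt hfix.minimalPeriod_dvd d.val_lt)
  exact ⟨cubeRep g J n, ⟨fun _ _ => Set.mem_univ _, hinj, hsurj.ge⟩,
    fun x _ y _ => ⟨cubeRep_sup hsup J x y, cubeRep_inf hinf J x y⟩,
    fun x hx => by simpa using cubeRep_iterate (J := (J : Set L)) (hper x hx) 1⟩

/-- In a subdirectly irreducible distributive rotational lattice,
if `a` is non-stable with orbit of size `n`, then the subalgebra generated by `{a}`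
is isomorphic to the `n`-dimensional rotational cube `𝔅_n` (the powerset lattice of
`ZMod n` with the shift). -/
theorem stmt_9 {L : Type*} [DistribLattice L] (g : L → L)
    (hsup : ∀ x y : L, g (x ⊔ y) = g x ⊔ g y)
    (hinf : ∀ x y : L, g (x ⊓ y) = g x ⊓ g y)
    (hbij : Function.Bijective g)
    (hord : ∃ m : ℕ, 0 < m ∧ g^[m] = id)
    (hSI : SubdirectlyIrreducible g)
    (a : L) (ha : g a ≠ a)
    (n : ℕ) (horb : (Set.range fun i : ℕ => g^[i] a).ncard = n) :
    ∃ f : L → Set (ZMod n),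
      Set.BijOn f (genSub g {a}) Set.univ ∧
      (∀ x ∈ genSub g {a}, ∀ y ∈ genSub g {a},
        f (x ⊔ y) = f x ∪ f y ∧ f (x ⊓ y) = f x ∩ f y) ∧
      (∀ x ∈ genSub g {a}, f (g x) = (· + 1) '' f x) :=
  stmt_9_general g hsup hinf hord hSI a ha n horb
end

section
/- Every subdirectly irreducible distributive rotational lattice of order n is isomorphic to the n-dimensional rotational cube 𝔅_n. In particular, every subdirectly irreducible distributive rotational lattice is simple. -/
open Function

theorem DistribLattice.exists_latticeHom_prop_of_not_le {α : Type*} [DistribLattice α] {a b : α}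
    (hab : ¬ a ≤ b) : ∃ χ : LatticeHom α Prop, χ a ∧ ¬ χ b := by
  have hdisj : Disjoint (Order.PFilter.principal a : Set α) (Order.Ideal.principal b) :=
    Set.disjoint_left.mpr fun x hax hxb =>
      hab ((Order.PFilter.mem_principal.mp hax).trans (Order.Ideal.mem_principal.mp hxb))
  obtain ⟨J, hJ, hbJ, haJ⟩ := DistribLattice.prime_ideal_of_disjoint_filter_ideal hdisj
  refine ⟨{ toFun := (· ∉ J), map_sup' := ?_, map_inf' := ?_ }, ?_, ?_⟩
  · intro x y
    simp only [Order.Ideal.sup_mem_iff, not_and_or]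
    rfl
  · intro x y
    refine propext ⟨fun h => ⟨fun hx => h (J.lower inf_le_left hx),
      fun hy => h (J.lower inf_le_right hy)⟩, fun h hxy => ?_⟩
    rcases hJ.mem_or_mem hxy with hx | hy
    exacts [h.1 hx, h.2 hy]
  · exact Set.disjoint_left.mp haJ (Order.PFilter.mem_principal.mpr le_rfl)
  · exact not_not.mpr (hbJ Order.Ideal.mem_principal_self)

theorem Function.iterate_eq_of_natCast_eq {α : Type*} {f : α → α} {n : ℕ} (hf : f^[n] = id)
    {k l : ℕ} (h : (k : ZMod n) = l) : f^[k] = f^[l] := by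
  funext x
  have hx : IsPeriodicPt f n x := congrFun hf x
  rw [← hx.iterate_mod_apply k, ← hx.iterate_mod_apply l,
    (ZMod.natCast_eq_natCast_iff' k l n).mp h]

theorem iterate_image_add_one {M : Type*} [AddMonoidWithOne M] (k : ℕ) (A : Set M) :
    (fun B : Set M => (· + 1) '' B)^[k] A = (· + (k : M)) '' A := by
  induction k with
  | zero => simp
  | succ k ih =>
    rw [iterate_succ_apply', ih, Set.image_image]
    push_cast
    simp only [add_assoc]

theorem Set.eq_univ_of_separating {α : Type*} [Finite α] [Nonempty α] {S : Set (Set α)}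
    (hsup : SupClosed S) (hinf : InfClosed S) (hmem : ∀ j, ∃ A ∈ S, j ∈ A)
    (hnotMem : ∀ j, ∃ A ∈ S, j ∉ A) (hsep : ∀ i j, i ≠ j → ∃ A ∈ S, j ∈ A ∧ i ∉ A) :
    S = Set.univ := by
  have hsingleton : ∀ j, {j} ∈ S := by
    intro j
    have hB : ∀ i, ∃ A ∈ S, j ∈ A ∧ (i ≠ j → i ∉ A) := fun i => by
      by_cases hij : i = j
      · obtain ⟨A, hA, hjA⟩ := hmem j
        exact ⟨A, hA, hjA, absurd hij⟩
      · obtain ⟨A, hA, hjA, hiA⟩ := hsep i j hij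
        exact ⟨A, hA, hjA, fun _ => hiA⟩
    choose B hBS hjB hiB using hB
    have hj : ({j} : Set α) = ⨅ i, B i := by
      ext k
      simp only [Set.mem_singleton_iff, Set.iInf_eq_iInter, Set.mem_iInter]
      exact ⟨fun hk i => hk ▸ hjB i, fun hk => by_contra fun hkj => hiB k hkj (hk k)⟩
    exact hj ▸ hinf.iInf_mem_of_nonempty hBS
  have hempty : ∅ ∈ S := by
    obtain ⟨j⟩ := ‹Nonempty α›
    obtain ⟨A, hA, hjA⟩ := hnotMem j
    simpa [Set.singleton_inter_eq_empty.mpr hjA] using hinf (hsingleton j) hA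
  refine Set.eq_univ_of_forall fun T => ?_
  simpa using hsup.biSup_mem T.toFinite hempty fun i _ => hsingleton i

theorem ZMod.exists_mem_notMem_of_aperiodic {n : ℕ} [NeZero n] {S : Set (Set (ZMod n))}
    (hrot : ∀ c, ∀ A ∈ S, (· + c) '' A ∈ S) (haper : ∀ d ≠ 0, ∃ A ∈ S, (· + d) '' A ≠ A)
    {i j : ZMod n} (hij : i ≠ j) : ∃ A ∈ S, j ∈ A ∧ i ∉ A := by
  by_contra! h
  obtain ⟨A, hA, hAd⟩ := haper (i - j) (sub_ne_zero.mpr hij)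
  have hsub : (· + (i - j)) '' A ⊆ A := by
    rintro _ ⟨l, hl, rfl⟩
    obtain ⟨m, hm, hmi⟩ := h _ (hrot (j - l) A hA) ⟨l, hl, by ring⟩
    convert hm using 1
    linear_combination hmi.symm
  exact hAd (Set.eq_of_subset_of_ncard_le hsub
    (Set.ncard_image_of_injective A (add_left_injective _)).ge)

theorem ZMod.eq_univ_of_aperiodic {n : ℕ} [NeZero n] {S : Set (Set (ZMod n))}
    (hsup : SupClosed S) (hinf : InfClosed S) (hrot : ∀ c, ∀ A ∈ S, (· + c) '' A ∈ S)
    (haper : ∀ d ≠ 0, ∃ A ∈ S, (· + d) '' A ≠ A) (hmem : ∃ A ∈ S, (0 : ZMod n) ∈ A)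
    (hnotMem : ∃ A ∈ S, (0 : ZMod n) ∉ A) : S = Set.univ := by
  obtain ⟨A, hAS, hA⟩ := hmem
  obtain ⟨B, hBS, hB⟩ := hnotMem
  refine Set.eq_univ_of_separating hsup hinf (fun j => ⟨_, hrot j A hAS, 0, hA, zero_add j⟩)
    (fun j => ⟨_, hrot j B hBS, ?_⟩) fun i j hij => exists_mem_notMem_of_aperiodic hrot haper hij
  rintro ⟨i, hi, hij⟩
  rw [(add_left_injective j).eq_iff' (zero_add j)] at hij
  exact hB (hij ▸ hi)

theorem IsCongruence.iterate {L : Type*} [Lattice L] {g : L → L} {r : L → L → Prop}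
    (hr : IsCongruence g r) (k : ℕ) {x y : L} (hxy : r x y) : r (g^[k] x) (g^[k] y) := by
  induction k generalizing x y with
  | zero => exact hxy
  | succ k ih => exact ih (hr.2.2.2 x y hxy)

theorem IsCongruence.comap {L M F : Type*} [Lattice L] [Lattice M] [FunLike F L M]
    [LatticeHomClass F L M] {g : L → L} {h : M → M} {r : M → M → Prop} (hr : IsCongruence h r)
    (φ : F) (hφ : ∀ x, φ (g x) = h (φ x)) : IsCongruence g (fun x y => r (φ x) (φ y)) := by
  obtain ⟨hequiv, hsup, hinf, hrot⟩ := hr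
  refine ⟨⟨fun x => hequiv.refl _, hequiv.symm, hequiv.trans⟩, ?_, ?_, ?_⟩
  · intro x₁ y₁ x₂ y₂ h₁ h₂
    simpa only [map_sup] using hsup _ _ _ _ h₁ h₂
  · intro x₁ y₁ x₂ y₂ h₁ h₂
    simpa only [map_inf] using hinf _ _ _ _ h₁ h₂
  · intro x y hxy
    simpa only [hφ] using hrot _ _ hxy

theorem isCongruence_iterate_ker {L M : Type*} [Lattice L] [Lattice M] {g : L → L}
    (hsup : ∀ x y : L, g (x ⊔ y) = g x ⊔ g y) (hinf : ∀ x y : L, g (x ⊓ y) = g x ⊓ g y)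
    (χ : LatticeHom L M) : IsCongruence g (fun x y => ∀ k : ℕ, χ (g^[k] x) = χ (g^[k] y)) := by
  refine ⟨⟨fun _ _ => rfl, fun h k => (h k).symm, fun h h' k => (h k).trans (h' k)⟩, ?_, ?_, ?_⟩
  · intro x₁ y₁ x₂ y₂ h₁ h₂ k
    rw [Semiconj₂.iterate hsup, Semiconj₂.iterate hsup, map_sup, map_sup, h₁, h₂]
  · intro x₁ y₁ x₂ y₂ h₁ h₂ k
    rw [Semiconj₂.iterate hinf, Semiconj₂.iterate hinf, map_inf, map_inf, h₁, h₂]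
  · intro x y h k
    simpa only [iterate_succ_apply] using h (k + 1)

theorem SubdirectlyIrreducible.exists_monolith_pair {L : Type*} [Lattice L] {g : L → L}
    (hSI : SubdirectlyIrreducible g) : ∃ a b : L, ¬ a ≤ b ∧
      ∀ θ, IsCongruence g θ → ¬ θ a b → ∀ x y, θ x y → x = y := by
  obtain ⟨μ, hμ, hμne, hμmin⟩ := hSI
  have hμeq : ∀ θ, IsCongruence g θ → (∀ x y, θ x y → x = y) → θ = (· = ·) := fun θ hθ h =>
    funext fun x => funext fun y => propext ⟨h x y, fun hxy => hxy ▸ hθ.1.refl x⟩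
  obtain ⟨a, b, hab, hne⟩ : ∃ a b, μ a b ∧ a ≠ b := by
    by_contra! h
    exact hμne (hμeq μ hμ h)
  have hmin : ∀ θ, IsCongruence g θ → ¬ θ a b → ∀ x y, θ x y → x = y := fun θ hθ hθab => by
    by_contra! h
    obtain ⟨x, y, hxy, hne⟩ := h
    exact hθab (hμmin θ hθ (fun hθeq => hne (by rwa [hθeq] at hxy)) a b hab)
  by_cases hle : a ≤ b
  · refine ⟨b, a, fun hba => hne (le_antisymm hle hba), fun θ hθ hθba => ?_⟩
    exact hmin θ hθ fun hθab => hθba (hθ.1.symm hθab)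
  · exact ⟨a, b, hle, hmin⟩

def IsSimpleRotational {L : Type*} [Lattice L] (g : L → L) : Prop :=
  ∀ r : L → L → Prop, IsCongruence g r → (∀ x y, r x y ↔ x = y) ∨ ∀ x y, r x y

theorem IsSimpleRotational.of_orderIso {L M : Type*} [Lattice L] [Lattice M] {g : L → L}
    {h : M → M} (e : L ≃o M) (he : ∀ x, e (g x) = h (e x)) (hM : IsSimpleRotational h) :
    IsSimpleRotational g := by
  intro r hr
  have he' : ∀ y, e.symm (h y) = g (e.symm y) := fun y => by
    rw [e.symm_apply_eq, he, e.apply_symm_apply]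
  rcases hM _ (hr.comap e.symm he') with htriv | htotal
  · left
    intro x y
    simpa using htriv (e x) (e y)
  · right
    intro x y
    simpa using htotal (e x) (e y)

theorem ZMod.isSimpleRotational_image_add_one (n : ℕ) [NeZero n] :
    IsSimpleRotational (fun A : Set (ZMod n) => (· + 1) '' A) := by
  intro r hr
  by_cases htriv : ∀ A B, r A B → A = B
  · exact Or.inl fun A B => ⟨htriv A B, fun h => h ▸ hr.1.refl A⟩
  right
  push Not at htriv
  obtain ⟨A, B, hAB, hne⟩ := htriv
  obtain ⟨j, hj⟩ : ∃ j, ¬ (j ∈ A ↔ j ∈ B) := by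
    by_contra! h
    exact hne (Set.ext h)
  have hj : r ∅ {j} := by
    have hcut := hr.2.2.1 _ _ _ _ hAB (hr.1.refl {j})
    by_cases hjA : j ∈ A
    · have hjB : j ∉ B := fun hjB => hj (iff_of_true hjA hjB)
      exact hr.1.symm (by simpa [hjA, hjB] using hcut)
    · have hjB : j ∈ B := by_contra fun hjB => hj (iff_of_false hjA hjB)
      simpa [hjA, hjB] using hcut
  have hpoint : ∀ i, r ∅ {i} := fun i => by
    have hshift := hr.iterate (i - j).val hj
    rwa [iterate_image_add_one, iterate_image_add_one, Set.image_empty, Set.image_singleton,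
      ZMod.natCast_zmod_val, add_sub_cancel] at hshift
  have hall : ∀ T : Set (ZMod n), r ∅ T := fun T => by
    refine Set.Finite.induction_on (motive := fun T _ => r ∅ T) T T.toFinite (hr.1.refl ∅) ?_
    intro a T _ _ hT
    simpa only [sup_idem, Set.sup_eq_union, Set.singleton_union] using hr.2.1 _ _ _ _ (hpoint a) hT
  exact fun A B => hr.1.trans (hr.1.symm (hall A)) (hall B)

section RotationalCube

variable {L : Type*} [DistribLattice L] {g : L → L}

/-- Coordinate `i` of `x` is `χ (g⁻ⁱ x)`, written `g^[(-i).val]`, so that `g` becomes the shift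
`i ↦ i + 1`. -/
def cubeHom (hsup : ∀ x y : L, g (x ⊔ y) = g x ⊔ g y) (hinf : ∀ x y : L, g (x ⊓ y) = g x ⊓ g y)
    (n : ℕ) (χ : LatticeHom L Prop) : LatticeHom L (Set (ZMod n)) where
  toFun x := {i | χ (g^[(-i).val] x)}
  map_sup' x y := by
    ext i
    change χ (g^[(-i).val] (x ⊔ y)) ↔ χ (g^[(-i).val] x) ∨ χ (g^[(-i).val] y)
    rw [Semiconj₂.iterate hsup, map_sup]
    rfl
  map_inf' x y := by
    ext i
    change χ (g^[(-i).val] (x ⊓ y)) ↔ χ (g^[(-i).val] x) ∧ χ (g^[(-i).val] y)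
    rw [Semiconj₂.iterate hinf, map_inf]
    rfl

theorem mem_cubeHom {hsup : ∀ x y : L, g (x ⊔ y) = g x ⊔ g y}
    {hinf : ∀ x y : L, g (x ⊓ y) = g x ⊓ g y} {n : ℕ} {χ : LatticeHom L Prop} {x : L}
    {i : ZMod n} : i ∈ cubeHom hsup hinf n χ x ↔ χ (g^[(-i).val] x) :=
  Iff.rfl

variable {hsup : ∀ x y : L, g (x ⊔ y) = g x ⊔ g y} {hinf : ∀ x y : L, g (x ⊓ y) = g x ⊓ g y}
  {n : ℕ} [NeZero n]

theorem cubeHom_apply_map (hgn : g^[n] = id) (χ : LatticeHom L Prop) (x : L) :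
    cubeHom hsup hinf n χ (g x) = (· + 1) '' cubeHom hsup hinf n χ x := by
  ext i
  rw [Set.image_add_right, Set.mem_preimage, mem_cubeHom, mem_cubeHom, ← iterate_succ_apply,
    iterate_eq_of_natCast_eq hgn (l := (-(i + -1)).val)]
  push_cast [ZMod.natCast_val, ZMod.cast_id]
  ring

theorem cubeHom_iterate (hgn : g^[n] = id) (χ : LatticeHom L Prop) (k : ℕ) (x : L) :
    cubeHom hsup hinf n χ (g^[k] x) = (· + (k : ZMod n)) '' cubeHom hsup hinf n χ x := by
  rw [Semiconj.iterate_right (cubeHom_apply_map hgn χ) k x, iterate_image_add_one]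

theorem cubeHom_injective (hgn : g^[n] = id) {χ : LatticeHom L Prop}
    (hsep : ∀ x y, (∀ k : ℕ, χ (g^[k] x) = χ (g^[k] y)) → x = y) :
    Injective (cubeHom hsup hinf n χ) := by
  intro x y hxy
  refine hsep x y fun k => propext ?_
  have hk := Set.ext_iff.mp hxy (-(k : ZMod n))
  rwa [mem_cubeHom, mem_cubeHom, neg_neg,
    iterate_eq_of_natCast_eq hgn (ZMod.natCast_zmod_val (k : ZMod n))] at hk

theorem cubeHom_surjective (hgn : g^[n] = id) (hmin : ∀ m : ℕ, 0 < m → m < n → g^[m] ≠ id)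
    {χ : LatticeHom L Prop} (hinj : Injective (cubeHom hsup hinf n χ)) {a b : L} (ha : χ a)
    (hb : ¬ χ b) : Surjective (cubeHom hsup hinf n χ) := by
  set f := cubeHom hsup hinf n χ
  have hrot : ∀ c, ∀ A ∈ Set.range f, (· + c) '' A ∈ Set.range f := by
    rintro c _ ⟨x, rfl⟩
    exact ⟨g^[c.val] x, by rw [cubeHom_iterate hgn, ZMod.natCast_zmod_val]⟩
  have haper : ∀ d ≠ 0, ∃ A ∈ Set.range f, (· + d) '' A ≠ A := by
    intro d hd
    by_contra! h
    refine hmin d.val (ZMod.val_pos.mpr hd) (ZMod.val_lt d) (funext fun x => hinj ?_)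
    rw [cubeHom_iterate hgn, ZMod.natCast_zmod_val, h _ ⟨x, rfl⟩, id]
  have hzero : ∀ x, (0 : ZMod n) ∈ f x ↔ χ x := fun x => by
    rw [mem_cubeHom, neg_zero, ZMod.val_zero, iterate_zero, id]
  exact Set.range_eq_univ.mp (ZMod.eq_univ_of_aperiodic (supClosed_range f) (infClosed_range f)
    hrot haper ⟨f a, ⟨a, rfl⟩, (hzero a).mpr ha⟩ ⟨f b, ⟨b, rfl⟩, fun h => hb ((hzero b).mp h)⟩)

end RotationalCube

theorem stmt_10_general {L : Type*} [DistribLattice L] (g : L → L)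
    (hsup : ∀ x y : L, g (x ⊔ y) = g x ⊔ g y)
    (hinf : ∀ x y : L, g (x ⊓ y) = g x ⊓ g y)
    (n : ℕ) (hn : 0 < n) (hgn : g^[n] = id)
    (hmin : ∀ m : ℕ, 0 < m → m < n → g^[m] ≠ id)
    (hSI : SubdirectlyIrreducible g) :
    (∃ f : L → Set (ZMod n),
      Function.Bijective f ∧
      (∀ x y : L, f (x ⊔ y) = f x ∪ f y ∧ f (x ⊓ y) = f x ∩ f y) ∧
      (∀ x : L, f (g x) = (· + 1) '' f x)) ∧
    (∀ r : L → L → Prop, IsCongruence g r →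
      (∀ x y, r x y ↔ x = y) ∨ (∀ x y, r x y)) := by
  have : NeZero n := ⟨hn.ne'⟩
  obtain ⟨a, b, hab, hmonolith⟩ := hSI.exists_monolith_pair
  obtain ⟨χ, ha, hb⟩ := DistribLattice.exists_latticeHom_prop_of_not_le hab
  set f := cubeHom hsup hinf n χ
  have hinj : Injective f := cubeHom_injective hgn
    (hmonolith _ (isCongruence_iterate_ker hsup hinf χ) fun h => hb ((h 0).mp ha))
  have hsurj : Surjective f := cubeHom_surjective hgn hmin hinj ha hb
  have hrot : ∀ x, f (g x) = (· + 1) '' f x := cubeHom_apply_map hgn χ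
  refine ⟨⟨f, ⟨hinj, hsurj⟩, fun x y => ⟨map_sup f x y, map_inf f x y⟩, hrot⟩, ?_⟩
  exact IsSimpleRotational.of_orderIso (OrderIso.ofSurjective (orderEmbeddingOfInjective f hinj)
    hsurj) hrot (ZMod.isSimpleRotational_image_add_one n)

/-- Every subdirectly irreducible distributive rotational lattice of
order `n` is isomorphic to the rotational cube `𝔅_n`, and it is simple. -/
theorem stmt_10 {L : Type*} [DistribLattice L] (g : L → L)
    (hsup : ∀ x y : L, g (x ⊔ y) = g x ⊔ g y)
    (hinf : ∀ x y : L, g (x ⊓ y) = g x ⊓ g y)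
    (hbij : Function.Bijective g)
    (n : ℕ) (hn : 0 < n) (hgn : g^[n] = id)
    (hmin : ∀ m : ℕ, 0 < m → m < n → g^[m] ≠ id)
    (hSI : SubdirectlyIrreducible g) :
    (∃ f : L → Set (ZMod n),
      Function.Bijective f ∧
      (∀ x y : L, f (x ⊔ y) = f x ∪ f y ∧ f (x ⊓ y) = f x ∩ f y) ∧
      (∀ x : L, f (g x) = (· + 1) '' f x)) ∧
    (∀ r : L → L → Prop, IsCongruence g r →
      (∀ x y, r x y ↔ x = y) ∨ (∀ x y, r x y)) :=
  stmt_10_general g hsup hinf n hn hgn hmin hSI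
end

section
/- If m divides n (m, n ≥ 1), then the m-dimensional rotational cube 𝔅_m embeds into 𝔅_n as a rotational lattice: the map is determined by sending the j-th atom of 𝔅_m to b_j = ⋁_{r=0}^{n/m - 1} a_{rm+j} in 𝔅_n, and it is an injective homomorphism of lattices commuting with the shift automorphisms. -/
/-- If `m ∣ n`, then `𝔅_m` embeds into `𝔅_n` as a rotational lattice:
there is an injective map `Set (ZMod m) → Set (ZMod n)` preserving `∪`, `∩`,
commuting with the shift automorphisms, and sending the `j`-th atom `{j}` to
`b_j = ⋁_{r < n/m} a_{r·m + j}`. -/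
theorem stmt_13 (m n : ℕ) (hm : 0 < m) (hn : 0 < n) (hmn : m ∣ n) :
    ∃ f : Set (ZMod m) → Set (ZMod n),
      Function.Injective f ∧
      (∀ S T : Set (ZMod m), f (S ∪ T) = f S ∪ f T) ∧
      (∀ S T : Set (ZMod m), f (S ∩ T) = f S ∩ f T) ∧
      (∀ S : Set (ZMod m), f ((· + 1) '' S) = (· + 1) '' f S) ∧
      (∀ j : ZMod m,
        f {j} = {i : ZMod n | ∃ r : ℕ, r < n / m ∧
          i = ((r * m + j.val : ℕ) : ZMod n)}) := by
  haveI : NeZero m := ⟨hm.ne'⟩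
  haveI : NeZero n := ⟨hn.ne'⟩
  set π : ZMod n →+* ZMod m := ZMod.castHom hmn (ZMod m) with hπ
  have hval : ∀ i : ZMod n, ((i.val : ℕ) : ZMod n) = i := by
    intro i; rw [ZMod.natCast_val, ZMod.cast_id]
  have hπval : ∀ i : ZMod n, π i = ((i.val : ℕ) : ZMod m) := by
    intro i
    conv_lhs => rw [← hval i]
    rw [map_natCast]
  refine ⟨fun S => π ⁻¹' S, ?_, fun S T => rfl, fun S T => rfl, ?_, ?_⟩
  · apply Set.preimage_injective.mpr
    intro j
    refine ⟨((j.val : ℕ) : ZMod n), ?_⟩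
    rw [map_natCast, ZMod.natCast_val, ZMod.cast_id]
  · intro S
    ext i
    simp only [Set.mem_preimage, Set.mem_image]
    constructor
    · rintro ⟨x, hx, hxe⟩
      exact ⟨i - 1, by rw [map_sub, map_one, ← hxe]; simpa using hx, by ring⟩
    · rintro ⟨y, hy, hye⟩
      exact ⟨π y, hy, by rw [← hye, map_add, map_one]⟩
  · intro j
    ext i
    simp only [Set.mem_preimage, Set.mem_singleton_iff, Set.mem_setOf_eq]
    constructor
    · intro h
      refine ⟨i.val / m, ?_, ?_⟩
      · exact Nat.div_lt_div_of_lt_of_dvd hmn (ZMod.val_lt i)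
      · have hjv : j.val = i.val % m := by
          rw [← h, hπval, ZMod.val_natCast]
        rw [hjv, Nat.div_add_mod', hval]
    · rintro ⟨r, hr, rfl⟩
      rw [map_natCast, Nat.cast_add, Nat.cast_mul, ZMod.natCast_self,
        mul_zero, zero_add, ZMod.natCast_val, ZMod.cast_id]
end

section
/- For positive integers m and n, 𝔅_m is a homomorphic image of a subalgebra of 𝔅_n (in the signature ∨, ∧, g) if and only if m divides n. -/
lemma shift_iter {k : ℕ} (x : Set (ZMod k)) (j : ℕ) :
    ((· + 1) '' ·)^[j] x = (· + (j : ZMod k)) '' x := by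
  induction j with
  | zero => simp
  | succ j ih =>
    rw [Function.iterate_succ_apply', ih, ← Set.image_comp]
    push_cast
    ext a
    simp [add_assoc]

/-- For positive integers `m, n`, the rotational cube `𝔅_m` is a
homomorphic image of a subalgebra of `𝔅_n` (in the signature `∪, ∩, shift`)
if and only if `m ∣ n`. -/
theorem stmt_14 (m n : ℕ) (hm : 0 < m) (hn : 0 < n) :
    (∃ S : Set (Set (ZMod n)),
      (∀ x ∈ S, ∀ y ∈ S, x ∪ y ∈ S) ∧
      (∀ x ∈ S, ∀ y ∈ S, x ∩ y ∈ S) ∧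
      (∀ x ∈ S, (· + 1) '' x ∈ S) ∧
      ∃ f : Set (ZMod n) → Set (ZMod m),
        Set.SurjOn f S Set.univ ∧
        (∀ x ∈ S, ∀ y ∈ S, f (x ∪ y) = f x ∪ f y ∧ f (x ∩ y) = f x ∩ f y) ∧
        (∀ x ∈ S, f ((· + 1) '' x) = (· + 1) '' f x)) ↔
    m ∣ n := by
  constructor
  · rintro ⟨S, -, -, hshift, f, hsurj, -, hf⟩
    -- get x ∈ S with f x = {0}
    obtain ⟨x, hxS, hfx⟩ := hsurj (Set.mem_univ ({0} : Set (ZMod m)))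
    set g : Set (ZMod n) → Set (ZMod n) := ((· + 1) '' ·) with hg
    have key : ∀ j : ℕ, g^[j] x ∈ S ∧ f (g^[j] x) = (· + (j : ZMod m)) '' {0} := by
      intro j
      induction j with
      | zero => exact ⟨hxS, by simpa using hfx⟩
      | succ j ih =>
        obtain ⟨hmem, hval⟩ := ih
        constructor
        · rw [Function.iterate_succ_apply']
          exact hshift _ hmem
        · rw [Function.iterate_succ_apply', hg, hf _ hmem, hval, ← Set.image_comp]
          push_cast
          ext a
          simp [add_assoc]
    obtain ⟨-, hkey⟩ := key n
    have hgn : g^[n] x = x := by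
      rw [hg, shift_iter, ZMod.natCast_self]
      simp
    rw [hgn, hfx] at hkey
    have h0 : (0 : ZMod m) ∈ (· + (n : ZMod m)) '' ({0} : Set (ZMod m)) := by
      rw [← hkey]; rfl
    simp only [Set.image_singleton, Set.mem_singleton_iff, zero_add] at h0
    haveI : NeZero m := ⟨hm.ne'⟩
    exact (ZMod.natCast_eq_zero_iff n m).mp h0.symm
  · intro hdvd
    haveI : NeZero n := ⟨hn.ne'⟩
    haveI : NeZero m := ⟨hm.ne'⟩
    set π : ZMod n →+* ZMod m := ZMod.castHom hdvd (ZMod m) with hπ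
    have hπs : Function.Surjective π := by
      intro a
      exact ⟨(a.val : ZMod n), by rw [hπ]; simp [ZMod.natCast_val]⟩
    have hcomm : ∀ A : Set (ZMod m), (· + 1) '' (π ⁻¹' A) = π ⁻¹' ((· + 1) '' A) := by
      intro A
      ext a
      constructor
      · rintro ⟨b, hb, rfl⟩
        exact ⟨π b, hb, by simp⟩
      · rintro ⟨b, hb, hba⟩
        refine ⟨a - 1, ?_, by ring⟩
        have : π (a - 1) = b := by
          rw [map_sub, map_one, ← hba]; ring
        rwa [Set.mem_preimage, this]
    refine ⟨Set.range (fun A : Set (ZMod m) => π ⁻¹' A), ?_, ?_, ?_,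
      fun x => π '' x, ?_, ?_, ?_⟩
    · rintro x ⟨A, rfl⟩ y ⟨B, rfl⟩; exact ⟨A ∪ B, rfl⟩
    · rintro x ⟨A, rfl⟩ y ⟨B, rfl⟩; exact ⟨A ∩ B, rfl⟩
    · rintro x ⟨A, rfl⟩
      exact ⟨(· + 1) '' A, (hcomm A).symm⟩
    · rintro A -
      exact ⟨π ⁻¹' A, ⟨A, rfl⟩, Set.image_preimage_eq A hπs⟩
    · rintro x ⟨A, rfl⟩ y ⟨B, rfl⟩
      constructor
      · show π '' (π ⁻¹' A ∪ π ⁻¹' B) = π '' (π ⁻¹' A) ∪ π '' (π ⁻¹' B)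
        rw [← Set.preimage_union, Set.image_preimage_eq _ hπs,
          Set.image_preimage_eq _ hπs, Set.image_preimage_eq _ hπs]
      · show π '' (π ⁻¹' A ∩ π ⁻¹' B) = π '' (π ⁻¹' A) ∩ π '' (π ⁻¹' B)
        rw [← Set.preimage_inter, Set.image_preimage_eq _ hπs,
          Set.image_preimage_eq _ hπs, Set.image_preimage_eq _ hπs]
    · rintro x ⟨A, rfl⟩
      show π '' ((· + 1) '' (π ⁻¹' A)) = (· + 1) '' (π '' (π ⁻¹' A))
      rw [hcomm A, Set.image_preimage_eq _ hπs, Set.image_preimage_eq _ hπs]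
end

section
/- Let X be a finite divisor-closed subset of the positive integers (x ∈ X and y ∣ x imply y ∈ X), and let V(X) be the variety of rotational lattices generated by {𝔅_n : n ∈ X}. Then a subdirectly irreducible rotational lattice L belongs to V(X) if and only if L is isomorphic to 𝔅_n for some n ∈ X. -/
/-- Terms in the language of rotational lattices with variables in `ℕ`. -/
inductive RTerm : Type
  | var : ℕ → RTerm
  | sup : RTerm → RTerm → RTerm
  | inf : RTerm → RTerm → RTerm
  | rot : RTerm → RTerm

def RTerm.eval {L : Type*} [Lattice L] (g : L → L) (v : ℕ → L) : RTerm → L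
  | .var i => v i
  | .sup t₁ t₂ => t₁.eval g v ⊔ t₂.eval g v
  | .inf t₁ t₂ => t₁.eval g v ⊓ t₂.eval g v
  | .rot t => g (t.eval g v)

/-- By Birkhoff's theorem, an algebra `(L, g)` belongs to the variety `V(X)`
generated by `{𝔅_n : n ∈ X}` iff it satisfies every identity that holds in all
the generators `𝔅_n`, `n ∈ X`. -/
def MemV (X : Set ℕ) {L : Type*} [Lattice L] (g : L → L) : Prop :=
  ∀ t s : RTerm,
    (∀ n ∈ X, ∀ v : ℕ → Set (ZMod n),
      t.eval (cubeShift n) v = s.eval (cubeShift n) v) →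
    ∀ v : ℕ → L, t.eval g v = s.eval g v

lemma eval_hom {L : Type*} [Lattice L] {L' : Type*} [Lattice L']
    (g : L → L) (g' : L' → L') (f : L → L')
    (hs : ∀ x y, f (x ⊔ y) = f x ⊔ f y) (hi : ∀ x y, f (x ⊓ y) = f x ⊓ f y)
    (hr : ∀ x, f (g x) = g' (f x)) (v : ℕ → L) :
    ∀ t : RTerm, f (t.eval g v) = t.eval g' (f ∘ v) := by
  intro t
  induction t with
  | var i => rfl
  | sup a b iha ihb => simp only [RTerm.eval, hs, iha, ihb]
  | inf a b iha ihb => simp only [RTerm.eval, hi, iha, ihb]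
  | rot a iha => simp only [RTerm.eval, hr, iha]

lemma mem_cubeShift {n : ℕ} (S : Set (ZMod n)) (z : ZMod n) :
    z ∈ cubeShift n S ↔ z - 1 ∈ S := by
  constructor
  · rintro ⟨w, hw, rfl⟩; simpa using hw
  · intro h; exact ⟨z - 1, h, by ring⟩

lemma iterate_cubeShift {n : ℕ} (j : ℕ) (S : Set (ZMod n)) (z : ZMod n) :
    z ∈ (cubeShift n)^[j] S ↔ z - (j : ZMod n) ∈ S := by
  induction j generalizing z with
  | zero => simp
  | succ k ih =>
    rw [Function.iterate_succ_apply', mem_cubeShift, ih]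
    push_cast
    rw [sub_sub, add_comm]

def RTerm.rotN : ℕ → RTerm → RTerm
  | 0, t => t
  | k+1, t => .rot (RTerm.rotN k t)

lemma eval_rotN {L : Type*} [Lattice L] (g : L → L) (v : ℕ → L) (k : ℕ) (t : RTerm) :
    (RTerm.rotN k t).eval g v = g^[k] (t.eval g v) := by
  induction k with
  | zero => rfl
  | succ j ih => rw [RTerm.rotN, RTerm.eval, ih, Function.iterate_succ_apply']

def bigInf (f : ℕ → RTerm) : ℕ → RTerm
  | 0 => f 0
  | k+1 => .inf (bigInf f k) (f (k+1))

def bigSup (f : ℕ → RTerm) : ℕ → RTerm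
  | 0 => f 0
  | k+1 => .sup (bigSup f k) (f (k+1))

lemma mem_eval_bigInf {n : ℕ} (f : ℕ → RTerm) (c : ℕ) (v : ℕ → Set (ZMod n)) (z : ZMod n) :
    z ∈ (bigInf f c).eval (cubeShift n) v ↔ ∀ i ≤ c, z ∈ (f i).eval (cubeShift n) v := by
  induction c with
  | zero => simp [bigInf, Nat.le_zero]
  | succ k ih =>
    simp only [bigInf, RTerm.eval, Set.inf_eq_inter, Set.mem_inter_iff, ih]
    constructor
    · rintro ⟨h1, h2⟩ i hi
      rcases Nat.lt_or_ge i (k+1) with h | h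
      · exact h1 i (Nat.lt_succ_iff.mp h)
      · have : i = k + 1 := le_antisymm hi h
        rw [this]; exact h2
    · intro h
      exact ⟨fun i hi => h i (hi.trans (Nat.le_succ k)), h (k+1) le_rfl⟩

lemma mem_eval_bigSup {n : ℕ} (f : ℕ → RTerm) (c : ℕ) (v : ℕ → Set (ZMod n)) (z : ZMod n) :
    z ∈ (bigSup f c).eval (cubeShift n) v ↔ ∃ i ≤ c, z ∈ (f i).eval (cubeShift n) v := by
  induction c with
  | zero => simp [bigSup, Nat.le_zero]
  | succ k ih =>
    simp only [bigSup, RTerm.eval, Set.sup_eq_union, Set.mem_union, ih]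
    constructor
    · rintro (⟨i, hi, h⟩ | h)
      · exact ⟨i, hi.trans (Nat.le_succ k), h⟩
      · exact ⟨k+1, le_rfl, h⟩
    · rintro ⟨i, hi, h⟩
      rcases Nat.lt_or_ge i (k+1) with h' | h'
      · exact Or.inl ⟨i, Nat.lt_succ_iff.mp h', h⟩
      · have : i = k + 1 := le_antisymm hi h'
        rw [this] at h; exact Or.inr h

/-- The "M-term": `⋀_{i ≤ N} g^[i*q] x`. -/
def Mterm (q N : ℕ) : RTerm := bigInf (fun i => RTerm.rotN (i*q) (.var 0)) N

lemma mem_eval_Mterm {n : ℕ} (q N : ℕ) (v : ℕ → Set (ZMod n)) (z : ZMod n) :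
    z ∈ (Mterm q N).eval (cubeShift n) v ↔ ∀ i ≤ N, z - ((i*q : ℕ) : ZMod n) ∈ v 0 := by
  rw [Mterm, mem_eval_bigInf]
  apply forall_congr'; intro i
  apply imp_congr_right; intro _
  rw [eval_rotN, iterate_cubeShift]
  rfl

/-- The separating identity: for `2 ≤ m`, there is an identity valid in every
`𝔅_n` with `0 < n ≤ N` and `m ∤ n`, but failing in `𝔅_m`. -/
lemma sep_identity (m N : ℕ) (hm : 2 ≤ m) (hN1 : 1 ≤ N) :
    ∃ t s : RTerm,
      (∀ n : ℕ, 0 < n → n ≤ N → ¬ m ∣ n → ∀ v : ℕ → Set (ZMod n),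
        t.eval (cubeShift n) v = s.eval (cubeShift n) v) ∧
      t.eval (cubeShift m) (fun _ => {0}) ≠ s.eval (cubeShift m) (fun _ => {0}) := by
  have hm0 : 0 < m := by omega
  have hm1 : m ≠ 1 := by omega
  set c : ℕ → ℕ := fun p => if Nat.Prime p ∧ p ∣ m then p else m.minFac with hc
  have hcprime : ∀ p, Nat.Prime (c p) ∧ (c p) ∣ m := by
    intro p
    by_cases h : Nat.Prime p ∧ p ∣ m
    · simp only [hc, if_pos h]; exact h
    · simp only [hc, if_neg h]; exact ⟨Nat.minFac_prime hm1, Nat.minFac_dvd m⟩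
  set B : RTerm := bigSup (fun p => Mterm (m / c p) N) m with hB
  refine ⟨.sup (Mterm m N) B, B, ?_, ?_⟩
  · -- validity in 𝔅_n for m ∤ n
    intro n hn0 hnN hmn v
    haveI : NeZero n := ⟨hn0.ne'⟩
    have hsub : (Mterm m N).eval (cubeShift n) v ⊆ B.eval (cubeShift n) v := by
      intro z hz
      rw [mem_eval_Mterm] at hz
      -- choose the prime p
      set d := Nat.gcd m n with hd
      have hdm : d ∣ m := Nat.gcd_dvd_left m n
      have hdn : d ∣ n := Nat.gcd_dvd_right m n
      have hd0 : 0 < d := Nat.gcd_pos_of_pos_left n hm0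
      have hdltm : d < m := by
        rcases lt_or_eq_of_le (Nat.le_of_dvd hm0 hdm) with h | h
        · exact h
        · exact absurd (h ▸ hdn) hmn
      have hmd1 : m / d ≠ 1 := by
        intro h
        have := Nat.div_mul_cancel hdm
        rw [h, one_mul] at this
        omega
      set p := (m / d).minFac with hp
      have hpprime : Nat.Prime p := Nat.minFac_prime hmd1
      have hpdvd' : p ∣ m / d := Nat.minFac_dvd _
      have hpdvd : p ∣ m := hpdvd'.trans (Nat.div_dvd_of_dvd hdm)
      have hdpm : d * p ∣ m := (Nat.dvd_div_iff_mul_dvd hdm).mp hpdvd'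
      set e := m / (d * p) with he
      have hme : m = d * p * e := (Nat.mul_div_cancel' hdpm).symm
      have hmp : m / p = d * e := by
        have : m = p * (d * e) := by rw [hme]; ring
        rw [this, Nat.mul_div_cancel_left _ hpprime.pos]
      have hpm : p ≤ m := Nat.le_of_dvd hm0 hpdvd
      have hcp : c p = p := by
        simp only [hc]
        rw [if_pos (⟨hpprime, hpdvd⟩ : Nat.Prime p ∧ p ∣ m)]
      rw [hB, mem_eval_bigSup]
      refine ⟨p, hpm, ?_⟩
      rw [hcp, mem_eval_Mterm]
      intro i _
      -- find i' ≤ N with i'*m ≡ i*(m/p) (mod n)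
      have hbez : ((d : ℤ) : ZMod n) = (m : ZMod n) * ((Nat.gcdA m n : ℤ) : ZMod n) := by
        have h1 : (d : ℤ) = m * Nat.gcdA m n + n * Nat.gcdB m n := Nat.gcd_eq_gcd_ab m n
        have h2 : ((d : ℤ) : ZMod n) = ((m * Nat.gcdA m n + n * Nat.gcdB m n : ℤ) : ZMod n) := by
          rw [← h1]
        rw [h2]
        push_cast
        rw [ZMod.natCast_self]
        ring
      set w : ZMod n := (i : ZMod n) * (e : ZMod n) * ((Nat.gcdA m n : ℤ) : ZMod n) with hw
      have hwm : w * (m : ZMod n) = ((i * (m / p) : ℕ) : ZMod n) := by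
        rw [hmp]
        push_cast
        rw [hw]
        have : ((d : ℕ) : ZMod n) = (m : ZMod n) * ((Nat.gcdA m n : ℤ) : ZMod n) := by
          rw [← hbez]; push_cast; ring
        rw [this]; ring
      have hwval : w.val ≤ N := le_trans (Nat.le_of_lt_succ (Nat.lt_succ_of_lt (ZMod.val_lt w))) hnN
      have hz' := hz w.val hwval
      have hcast : ((w.val * m : ℕ) : ZMod n) = ((i * (m / p) : ℕ) : ZMod n) := by
        push_cast
        rw [ZMod.natCast_rightInverse w]
        push_cast at hwm
        exact hwm
      rw [← hcast]
      exact hz'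
    ext z
    simp only [RTerm.eval, Set.sup_eq_union, Set.mem_union]
    constructor
    · rintro (h | h)
      · exact hsub h
      · exact h
    · intro h; exact Or.inr h
  · -- failure in 𝔅_m
    haveI : NeZero m := ⟨hm0.ne'⟩
    intro h
    have h0 : (0 : ZMod m) ∈ (RTerm.sup (Mterm m N) B).eval (cubeShift m) (fun _ => ({0} : Set (ZMod m))) := by
      simp only [RTerm.eval, Set.sup_eq_union, Set.mem_union]
      left
      rw [mem_eval_Mterm]
      intro i _
      have : ((i * m : ℕ) : ZMod m) = 0 := by
        push_cast [ZMod.natCast_self]; ring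
      simp [this]
    rw [h] at h0
    rw [hB, mem_eval_bigSup] at h0
    obtain ⟨p, _, hp⟩ := h0
    rw [mem_eval_Mterm] at hp
    obtain ⟨hqprime, hqdvd⟩ := hcprime p
    have h1 := hp 1 hN1
    have hq2 : 2 ≤ c p := hqprime.two_le
    have hmq0 : 0 < m / c p := Nat.div_pos (Nat.le_of_dvd hm0 hqdvd) (by omega)
    have hmqm : m / c p < m := Nat.div_lt_self hm0 (by omega)
    simp only [one_mul, Set.mem_singleton_iff, zero_sub, neg_eq_zero] at h1
    rw [ZMod.natCast_eq_zero_iff] at h1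
    have := Nat.le_of_dvd hmq0 h1
    omega

/-- Prime ideal separator in a (possibly unbounded) distributive lattice. -/
lemma exists_prime_ideal {L : Type*} [DistribLattice L] {a b : L} (hab : ¬ b ≤ a) :
    ∃ J : Set L, (∀ x y : L, x ≤ y → y ∈ J → x ∈ J) ∧
      (∀ x y : L, x ∈ J → y ∈ J → x ⊔ y ∈ J) ∧
      a ∈ J ∧ b ∉ J ∧ (∀ x y : L, x ⊓ y ∈ J → x ∈ J ∨ y ∈ J) := by
  classical
  set S : Set (Set L) := {J | (∀ x y : L, x ≤ y → y ∈ J → x ∈ J) ∧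
      (∀ x y : L, x ∈ J → y ∈ J → x ⊔ y ∈ J) ∧ a ∈ J ∧ b ∉ J} with hS
  have hdown : {x : L | x ≤ a} ∈ S := by
    refine ⟨fun x y hxy hy => le_trans hxy hy, fun x y hx hy => sup_le hx hy, le_rfl, hab⟩
  have hchain : ∀ c ⊆ S, IsChain (fun x1 x2 => x1 ⊆ x2) c → c.Nonempty →
      ∃ ub ∈ S, ∀ s ∈ c, s ⊆ ub := by
    intro c hcS hcC hcNe
    refine ⟨⋃₀ c, ⟨?_, ?_, ?_, ?_⟩, fun s hs => Set.subset_sUnion_of_mem hs⟩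
    · rintro x y hxy ⟨J, hJ, hy⟩
      exact ⟨J, hJ, (hcS hJ).1 x y hxy hy⟩
    · rintro x y ⟨J1, hJ1, hx⟩ ⟨J2, hJ2, hy⟩
      rcases hcC.total hJ1 hJ2 with h | h
      · exact ⟨J2, hJ2, (hcS hJ2).2.1 x y (h hx) hy⟩
      · exact ⟨J1, hJ1, (hcS hJ1).2.1 x y hx (h hy)⟩
    · obtain ⟨J, hJ⟩ := hcNe
      exact ⟨J, hJ, (hcS hJ).2.2.1⟩
    · rintro ⟨J, hJ, hb⟩
      exact (hcS hJ).2.2.2 hb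
  obtain ⟨J, -, hJmax⟩ := zorn_subset_nonempty S hchain _ hdown
  obtain ⟨hJd, hJs, hJa, hJb⟩ := hJmax.prop
  refine ⟨J, hJd, hJs, hJa, hJb, ?_⟩
  intro x y hxy
  by_contra hcon
  push_neg at hcon
  obtain ⟨hx, hy⟩ := hcon
  -- enlargements
  have hbig : ∀ u : L, u ∉ J → ∃ j ∈ J, b ≤ j ⊔ u := by
    intro u hu
    set Ju : Set L := {z | ∃ j ∈ J, z ≤ j ⊔ u} with hJu
    have hsub : J ⊆ Ju := fun j hj => ⟨j, hj, le_sup_left⟩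
    have huJu : u ∈ Ju := ⟨a, hJa, le_sup_right⟩
    by_cases hbJu : b ∈ Ju
    · exact hbJu
    · have : Ju ∈ S := by
        refine ⟨?_, ?_, hsub hJa, hbJu⟩
        · rintro z z' hzz' ⟨j, hj, hz'⟩
          exact ⟨j, hj, le_trans hzz' hz'⟩
        · rintro z z' ⟨j, hj, hz⟩ ⟨j', hj', hz'⟩
          exact ⟨j ⊔ j', hJs j j' hj hj',
            sup_le (le_trans hz (sup_le_sup_right le_sup_left u))
              (le_trans hz' (sup_le_sup_right le_sup_right u))⟩
      have heq : Ju = J := subset_antisymm (hJmax.2 this hsub) hsub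
      rw [heq] at huJu
      exact absurd huJu hu
  obtain ⟨j1, hj1, hb1⟩ := hbig x hx
  obtain ⟨j2, hj2, hb2⟩ := hbig y hy
  have key : b ≤ (j1 ⊔ j2) ⊔ (x ⊓ y) := by
    have h1 : b ≤ (j1 ⊔ j2) ⊔ x := le_trans hb1 (sup_le_sup_right le_sup_left x)
    have h2 : b ≤ (j1 ⊔ j2) ⊔ y := le_trans hb2 (sup_le_sup_right le_sup_right y)
    calc b ≤ ((j1 ⊔ j2) ⊔ x) ⊓ ((j1 ⊔ j2) ⊔ y) := le_inf h1 h2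
    _ = (j1 ⊔ j2) ⊔ (x ⊓ y) := (sup_inf_left _ _ _).symm
  exact hJb (hJd b _ key (hJs _ _ (hJs j1 j2 hj1 hj2) hxy))

/-- The main structural lemma: a subdirectly irreducible distributive rotational
lattice with `g^[N] = id` is isomorphic to some rotational cube `𝔅_m`. -/
lemma main_embed {L : Type*} [DistribLattice L] (g : L → L)
    (hsup : ∀ x y : L, g (x ⊔ y) = g x ⊔ g y)
    (hinf : ∀ x y : L, g (x ⊓ y) = g x ⊓ g y)
    (hbij : Function.Bijective g)
    (N : ℕ) (hN0 : 0 < N) (hgN : g^[N] = id)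
    (hSI : SubdirectlyIrreducible g) :
    ∃ m : ℕ, 0 < m ∧ m ∣ N ∧ ∃ F : L → Set (ZMod m),
      Function.Bijective F ∧ (∀ x y : L, F (x ⊔ y) = F x ∪ F y ∧ F (x ⊓ y) = F x ∩ F y) ∧
      (∀ x : L, F (g x) = cubeShift m (F x)) := by
  classical
  haveI : NeZero N := ⟨hN0.ne'⟩
  -- basic facts about g
  have hg_le : ∀ x y : L, x ≤ y → g x ≤ g y := by
    intro x y h
    have := hsup x y
    rw [sup_eq_right.mpr h] at this
    rw [this]
    exact le_sup_left
  have hg_le_iff : ∀ x y : L, g x ≤ g y ↔ x ≤ y := by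
    intro x y
    refine ⟨fun h => ?_, hg_le x y⟩
    have h2 : g (x ⊔ y) = g y := by rw [hsup]; exact sup_eq_right.mpr h
    have := hbij.injective h2
    exact sup_eq_right.mp this
  have hgmono : Monotone g := fun x y h => hg_le x y h
  have hit_le_iff : ∀ (k : ℕ) (x y : L), g^[k] x ≤ g^[k] y ↔ x ≤ y := by
    intro k
    induction k with
    | zero => intro x y; simp
    | succ j ih =>
      intro x y
      rw [Function.iterate_succ_apply', Function.iterate_succ_apply', hg_le_iff]
      exact ih x y
  have hit_sup : ∀ (k : ℕ) (x y : L), g^[k] (x ⊔ y) = g^[k] x ⊔ g^[k] y := by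
    intro k
    induction k with
    | zero => intro x y; simp
    | succ j ih =>
      intro x y
      simp only [Function.iterate_succ_apply', ih, hsup]
  have hit_inf : ∀ (k : ℕ) (x y : L), g^[k] (x ⊓ y) = g^[k] x ⊓ g^[k] y := by
    intro k
    induction k with
    | zero => intro x y; simp
    | succ j ih =>
      intro x y
      simp only [Function.iterate_succ_apply', ih, hinf]
  have hit_mod : ∀ (a : ℕ) (x : L), g^[a] x = g^[a % N] x := by
    intro a x
    conv_lhs => rw [← Nat.mod_add_div a N]
    rw [Function.iterate_add_apply]
    congr 1
    rw [Function.iterate_mul, hgN, Function.iterate_id]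
    rfl
  have hit_cast : ∀ (a b : ℕ) (x : L), ((a : ZMod N) = (b : ZMod N)) → g^[a] x = g^[b] x := by
    intro a b x h
    have := (ZMod.natCast_eq_natCast_iff a b N).mp h
    rw [hit_mod a x, hit_mod b x, this]
  -- the monolith pair
  obtain ⟨μ, hμc, hμne, hμmin⟩ := hSI
  have hpair : ∃ u v : L, μ u v ∧ u ≠ v := by
    by_contra h
    push_neg at h
    apply hμne
    funext u v
    apply propext
    exact ⟨fun hm => h u v hm, fun he => he ▸ hμc.1.refl u⟩
  obtain ⟨u, v, huv, hune⟩ := hpair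
  set a : L := u ⊓ v with ha
  set b : L := u ⊔ v with hb
  have hμab : μ a b := by
    have m1 : μ (u ⊓ v) (v ⊓ v) := hμc.2.2.1 u v v v huv (hμc.1.refl v)
    have m2 : μ (u ⊔ v) (v ⊔ v) := hμc.2.1 u v v v huv (hμc.1.refl v)
    rw [inf_idem] at m1
    rw [sup_idem] at m2
    exact hμc.1.trans m1 (hμc.1.symm m2)
  have hab_le : a ≤ b := inf_le_sup
  have hab_ne : a ≠ b := by
    intro h
    apply hune
    have h1 : u ≤ a := by rw [h]; exact le_sup_left
    have h2 : v ≤ a := by rw [h]; exact le_sup_right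
    exact le_antisymm (le_trans h1 inf_le_right) (le_trans h2 inf_le_left)
  have hba : ¬ b ≤ a := fun h => hab_ne (le_antisymm hab_le h)
  -- prime ideal separating a and b
  obtain ⟨J, hJd, hJs, hJa, hJb, hJp⟩ := exists_prime_ideal hba
  -- the embedding into 𝔅_N
  set f : L → Set (ZMod N) := fun x => {i : ZMod N | g^[(-i : ZMod N).val] x ∉ J} with hf
  have hfsup : ∀ x y : L, f (x ⊔ y) = f x ∪ f y := by
    intro x y
    ext i
    simp only [hf, Set.mem_setOf_eq, Set.mem_union, hit_sup]
    constructor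
    · intro h
      by_contra hc
      push_neg at hc
      exact h (hJs _ _ hc.1 hc.2)
    · rintro (h | h) hmem
      · exact h (hJd _ _ le_sup_left hmem)
      · exact h (hJd _ _ le_sup_right hmem)
  have hfinf : ∀ x y : L, f (x ⊓ y) = f x ∩ f y := by
    intro x y
    ext i
    simp only [hf, Set.mem_setOf_eq, Set.mem_inter_iff, hit_inf]
    constructor
    · intro h
      exact ⟨fun hx => h (hJd _ _ inf_le_left hx), fun hy => h (hJd _ _ inf_le_right hy)⟩
    · rintro ⟨hx, hy⟩ hmem
      rcases hJp _ _ hmem with h | h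
      · exact hx h
      · exact hy h
  have hfrot : ∀ x : L, f (g x) = cubeShift N (f x) := by
    intro x
    ext i
    rw [mem_cubeShift]
    simp only [hf, Set.mem_setOf_eq]
    have heq : g^[(-i : ZMod N).val] (g x) = g^[(-(i-1) : ZMod N).val] x := by
      rw [← Function.iterate_succ_apply]
      apply hit_cast
      rw [ZMod.natCast_rightInverse _]
      push_cast
      rw [ZMod.natCast_rightInverse _]
      ring
    rw [heq]
  -- f is injective
  have hfinj : Function.Injective f := by
    by_contra hni
    rw [Function.not_injective_iff] at hni
    obtain ⟨x, y, hfxy, hxy⟩ := hni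
    have hker : IsCongruence g (fun x y => f x = f y) := by
      refine ⟨⟨fun _ => rfl, fun h => h.symm, fun h1 h2 => h1.trans h2⟩, ?_, ?_, ?_⟩
      · intro x1 y1 x2 y2 h1 h2; rw [hfsup, hfsup, h1, h2]
      · intro x1 y1 x2 y2 h1 h2; rw [hfinf, hfinf, h1, h2]
      · intro x y h; rw [hfrot, hfrot, h]
    have hkne : (fun x y : L => f x = f y) ≠ (· = ·) := by
      intro h
      apply hxy
      have : (fun x y : L => f x = f y) x y := hfxy
      rw [h] at this
      exact this
    have hab' : f a = f b := hμmin _ hker hkne a b hμab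
    have h0a : (0 : ZMod N) ∈ f b := by
      simp only [hf, Set.mem_setOf_eq, neg_zero, ZMod.val_zero, Function.iterate_zero, id]
      exact hJb
    rw [← hab'] at h0a
    simp only [hf, Set.mem_setOf_eq, neg_zero, ZMod.val_zero, Function.iterate_zero, id] at h0a
    exact h0a hJa
  haveI : Finite L := Finite.of_injective f hfinj
  haveI : Fintype L := Fintype.ofFinite L
  haveI : Nonempty L := ⟨a⟩
  letI : OrderBot L := {
    bot := Finset.univ.inf' Finset.univ_nonempty id
    bot_le := fun x => Finset.inf'_le id (Finset.mem_univ x) }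
  -- transport of SupIrred along g
  have hgSI : ∀ x : L, SupIrred x → SupIrred (g x) := by
    intro x hx
    constructor
    · intro hmin
      apply hx.1
      intro y hy
      exact (hg_le_iff x y).mp (hmin (hg_le y x hy))
    · intro p q hpq
      obtain ⟨p', rfl⟩ := hbij.surjective p
      obtain ⟨q', rfl⟩ := hbij.surjective q
      rw [← hsup] at hpq
      rcases hx.2 (hbij.injective hpq) with h | h
      · exact Or.inl (by rw [h])
      · exact Or.inr (by rw [h])
  have hitSI : ∀ (k : ℕ) (x : L), SupIrred x → SupIrred (g^[k] x) := by
    intro k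
    induction k with
    | zero => intro x hx; simpa using hx
    | succ j ih =>
      intro x hx
      rw [Function.iterate_succ_apply']
      exact hgSI _ (ih x hx)
  -- every element is determined by the sup-irreducibles below it
  have hle_of_irr : ∀ x y : L, (∀ w : L, SupIrred w → w ≤ x → w ≤ y) → x ≤ y := by
    intro x y h
    obtain ⟨s, hsx, hsirr⟩ := exists_supIrred_decomposition x
    rw [← hsx]
    apply Finset.sup_le
    intro w hw
    exact h w (hsirr hw) (hsx ▸ Finset.le_sup (f := id) hw)
  have hginv : ∀ w : L, g (g^[N-1] w) = w := by
    intro w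
    have h1 : g^[N-1+1] w = g (g^[N-1] w) := Function.iterate_succ_apply' g (N-1) w
    have h2 : N - 1 + 1 = N := by omega
    rw [← h1, h2, hgN]
    rfl
  -- orbit transitivity on sup-irreducibles
  have horb : ∀ j j' : L, SupIrred j → SupIrred j' → ∃ i : ℕ, g^[i] j = j' := by
    intro j j' hj hj'
    by_contra hno
    push_neg at hno
    -- generic congruence construction: collapse everything except the sup-irreducibles
    -- outside the orbit of j0
    have mkcong : ∀ j0 : L, IsCongruence g
        (fun x y => ∀ w : L, SupIrred w → (∀ i : ℕ, g^[i] j0 ≠ w) → (w ≤ x ↔ w ≤ y)) := by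
      intro j0
      refine ⟨⟨fun x w _ _ => Iff.rfl, fun h w hw hwo => (h w hw hwo).symm,
        fun h1 h2 w hw hwo => (h1 w hw hwo).trans (h2 w hw hwo)⟩, ?_, ?_, ?_⟩
      · intro x1 y1 x2 y2 h1 h2 w hw hwo
        have hp : SupPrime w := supPrime_iff_supIrred.mpr hw
        rw [hp.le_sup, hp.le_sup, h1 w hw hwo, h2 w hw hwo]
      · intro x1 y1 x2 y2 h1 h2 w hw hwo
        rw [le_inf_iff, le_inf_iff, h1 w hw hwo, h2 w hw hwo]
      · intro x y h w hw hwo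
        have hw' : SupIrred (g^[N-1] w) := hitSI _ _ hw
        have hwo' : ∀ i, g^[i] j0 ≠ g^[N-1] w := by
          intro i hi
          apply hwo (i+1)
          rw [Function.iterate_succ_apply', hi, hginv]
        have e1 := hg_le_iff (g^[N-1] w) x
        have e2 := hg_le_iff (g^[N-1] w) y
        rw [hginv] at e1 e2
        rw [e1, e2]
        exact h _ hw' hwo'
    -- nontriviality of the collapse congruence
    have mkpair : ∀ j0 : L, SupIrred j0 →
        ∃ p q : L, p ≠ q ∧ (∀ w : L, SupIrred w → (∀ i : ℕ, g^[i] j0 ≠ w) → (w ≤ p ↔ w ≤ q)) := by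
      intro j0 hj0
      set jlow := (Finset.univ.filter (fun z : L => z < j0)).sup id with hjlow
      have hjlow_le : jlow ≤ j0 := by
        apply Finset.sup_le
        intro z hz
        exact (Finset.mem_filter.mp hz).2.le
      have hjlow_ne : jlow ≠ j0 := by
        intro h
        obtain ⟨z, hz, hzeq⟩ := hj0.finset_sup_eq h
        exact absurd (hzeq ▸ (Finset.mem_filter.mp hz).2) (lt_irrefl j0)
      refine ⟨jlow, j0, hjlow_ne, ?_⟩
      intro w hw hwo
      have hwj0 : w ≠ j0 := fun h => hwo 0 h.symm
      constructor
      · intro h; exact h.trans hjlow_le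
      · intro h
        have hlt : w < j0 := lt_of_le_of_ne h (fun h2 => hwo 0 h2.symm)
        exact Finset.le_sup (f := id) (Finset.mem_filter.mpr ⟨Finset.mem_univ w, hlt⟩)
    obtain ⟨p1, q1, hne1, hcol1⟩ := mkpair j hj
    obtain ⟨p2, q2, hne2, hcol2⟩ := mkpair j' hj'
    have hθ1ne : (fun x y => ∀ w : L, SupIrred w → (∀ i : ℕ, g^[i] j ≠ w) → (w ≤ x ↔ w ≤ y)) ≠ (· = ·) := by
      intro h
      exact hne1 (Eq.mp (congrFun (congrFun h p1) q1) hcol1)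
    have hθ2ne : (fun x y => ∀ w : L, SupIrred w → (∀ i : ℕ, g^[i] j' ≠ w) → (w ≤ x ↔ w ≤ y)) ≠ (· = ·) := by
      intro h
      exact hne2 (Eq.mp (congrFun (congrFun h p2) q2) hcol2)
    have t1 := hμmin _ (mkcong j) hθ1ne a b hμab
    have t2 := hμmin _ (mkcong j') hθ2ne a b hμab
    have hall : ∀ w : L, SupIrred w → (w ≤ a ↔ w ≤ b) := by
      intro w hw
      by_cases hcase : ∀ i : ℕ, g^[i] j ≠ w
      · exact t1 w hw hcase
      · push_neg at hcase
        obtain ⟨i, hi⟩ := hcase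
        apply t2 w hw
        intro i' hi'
        apply hno (N - i' % N + i)
        have key : g^[N - i' % N + i'] j' = j' := by
          have := hit_cast (N - i' % N + i') 0 j'
          rw [this]
          · rfl
          · push_cast [Nat.cast_sub (Nat.mod_lt i' hN0).le]
            rw [ZMod.natCast_self, ZMod.natCast_mod]
            ring
        calc g^[N - i' % N + i] j = g^[N - i' % N] (g^[i] j) := Function.iterate_add_apply _ _ _ _
        _ = g^[N - i' % N] (g^[i'] j') := by rw [hi, hi']
        _ = g^[N - i' % N + i'] j' := (Function.iterate_add_apply _ _ _ _).symm
        _ = j' := key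
    exact hab_ne (le_antisymm
      (hle_of_irr a b fun w hw hwa => (hall w hw).mp hwa)
      (hle_of_irr b a fun w hw hwb => (hall w hw).mpr hwb))
  -- there exists a sup-irreducible element
  have hj0ex : ∃ j0 : L, SupIrred j0 := by
    by_contra h
    push_neg at h
    exact hba (hle_of_irr b a fun w hw _ => absurd hw (h w))
  obtain ⟨j0, hj0⟩ := hj0ex
  -- the period m of j0
  have hex : ∃ i : ℕ, 0 < i ∧ g^[i] j0 = j0 := ⟨N, hN0, by rw [hgN]; rfl⟩
  set m := Nat.find hex with hm
  obtain ⟨hm0, hmfix⟩ := Nat.find_spec hex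
  have hmmin : ∀ i, 0 < i → i < m → g^[i] j0 ≠ j0 := fun i h1 h2 h3 => Nat.find_min hex h2 ⟨h1, h3⟩
  have hfixmul : ∀ q : ℕ, g^[m*q] j0 = j0 := by
    intro q
    rw [Function.iterate_mul]
    exact Function.iterate_fixed hmfix q
  have hdvd_iff : ∀ c : ℕ, g^[c] j0 = j0 ↔ m ∣ c := by
    intro c
    constructor
    · intro hc
      rcases Nat.eq_zero_or_pos (c % m) with h | h
      · exact Nat.dvd_of_mod_eq_zero h
      · exfalso
        apply hmmin (c % m) h (Nat.mod_lt _ hm0)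
        calc g^[c % m] j0 = g^[c % m] (g^[m*(c/m)] j0) := by rw [hfixmul]
        _ = g^[c % m + m*(c/m)] j0 := (Function.iterate_add_apply _ _ _ _).symm
        _ = g^[c] j0 := by rw [Nat.mod_add_div]
        _ = j0 := hc
    · rintro ⟨q, rfl⟩
      exact hfixmul q
  have hmN : m ∣ N := (hdvd_iff N).mp (by rw [hgN]; rfl)
  haveI : NeZero m := ⟨hm0.ne'⟩
  have hmodm : ∀ c : ℕ, g^[c] j0 = g^[c % m] j0 := by
    intro c
    conv_lhs => rw [← Nat.mod_add_div c m]
    rw [Function.iterate_add_apply, hfixmul]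
  have hcastm : ∀ c d : ℕ, ((c : ZMod m) = (d : ZMod m)) → g^[c] j0 = g^[d] j0 := by
    intro c d h
    have := (ZMod.natCast_eq_natCast_iff c d m).mp h
    rw [hmodm c, hmodm d, this]
  have hvalinj : ∀ c d : ℕ, c < m → d < m → g^[c] j0 = g^[d] j0 → c = d := by
    have key : ∀ c d : ℕ, c < m → d < m → c ≤ d → g^[c] j0 = g^[d] j0 → c = d := by
      intro c d hc hd hle h
      have h2 : g^[m-d+c] j0 = j0 := by
        have h3 := congrArg (g^[m-d]) h
        rw [← Function.iterate_add_apply, ← Function.iterate_add_apply] at h3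
        rw [h3, Nat.sub_add_cancel hd.le]
        exact hmfix
      have h4 := Nat.le_of_dvd (by omega) ((hdvd_iff _).mp h2)
      omega
    intro c d hc hd h
    rcases le_total c d with hle | hle
    · exact key c d hc hd hle h
    · exact (key d c hd hc hle h.symm).symm
  -- the orbit of j0 is an antichain
  have hanti : ∀ c : ℕ, g^[c] j0 ≤ j0 → g^[c] j0 = j0 := by
    intro c h
    have hQ : ∀ k : ℕ, g^[c*k] (g^[c] j0) ≤ g^[c] j0 := by
      intro k
      induction k with
      | zero => simp
      | succ q ih =>
        have hstep : g^[c] (g^[c] j0) ≤ g^[c] j0 := (hit_le_iff c _ _).mpr h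
        have hstep2 : g^[c*q] (g^[c] (g^[c] j0)) ≤ g^[c*q] (g^[c] j0) :=
          (hgmono.iterate (c*q)) hstep
        have heq : c*(q+1) = c*q + c := by ring
        calc g^[c*(q+1)] (g^[c] j0) = g^[c*q + c] (g^[c] j0) := by rw [heq]
        _ = g^[c*q] (g^[c] (g^[c] j0)) := Function.iterate_add_apply _ _ _ _
        _ ≤ g^[c*q] (g^[c] j0) := hstep2
        _ ≤ g^[c] j0 := ih
    have hj0eq : j0 = g^[c*(m-1)] (g^[c] j0) := by
      have hmm : m - 1 + 1 = m := Nat.succ_pred_eq_of_pos hm0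
      have heq2 : c*(m-1)+c = m * c := by
        calc c*(m-1)+c = c*((m-1)+1) := by ring
        _ = c * m := by rw [hmm]
        _ = m * c := Nat.mul_comm c m
      have h1 : g^[c*(m-1)+c] j0 = j0 := by
        rw [heq2]
        exact hfixmul c
      rw [Function.iterate_add_apply] at h1
      exact h1.symm
    exact le_antisymm h (le_trans (le_of_eq hj0eq) (hQ (m-1)))
  have hanti2 : ∀ p q : ℕ, g^[p] j0 ≤ g^[q] j0 → g^[p] j0 = g^[q] j0 := by
    intro p q h
    set r := N - q % N with hr
    have hle2 : g^[r + p] j0 ≤ g^[r + q] j0 := by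
      rw [Function.iterate_add_apply, Function.iterate_add_apply]
      exact (hgmono.iterate r) h
    have hrq : g^[r + q] j0 = j0 := by
      have hc0 : ((r + q : ℕ) : ZMod N) = ((0:ℕ) : ZMod N) := by
        push_cast [hr, Nat.cast_sub (Nat.mod_lt q hN0).le]
        rw [ZMod.natCast_self, ZMod.natCast_mod]
        ring
      simpa using hit_cast (r + q) 0 j0 hc0
    rw [hrq] at hle2
    have h5 := hanti (r+p) hle2
    have h6 := congrArg (g^[q]) h5
    rw [← Function.iterate_add_apply] at h6
    have h7 : g^[p] j0 = g^[q + (r+p)] j0 := by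
      apply hit_cast
      push_cast [hr, Nat.cast_sub (Nat.mod_lt q hN0).le]
      rw [ZMod.natCast_self, ZMod.natCast_mod]
      ring
    exact h7.trans h6
  -- the isomorphism with 𝔅_m
  set F : L → Set (ZMod m) := fun x => {i : ZMod m | g^[i.val] j0 ≤ x} with hF
  have hprime : ∀ i : ZMod m, SupPrime (g^[i.val] j0) :=
    fun i => supPrime_iff_supIrred.mpr (hitSI _ _ hj0)
  have hFsup : ∀ x y : L, F (x ⊔ y) = F x ∪ F y := by
    intro x y; ext i
    simp only [hF, Set.mem_setOf_eq, Set.mem_union]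
    exact (hprime i).le_sup
  have hFinf : ∀ x y : L, F (x ⊓ y) = F x ∩ F y := by
    intro x y; ext i
    simp only [hF, Set.mem_setOf_eq, Set.mem_inter_iff]
    exact le_inf_iff
  have hFrot : ∀ x : L, F (g x) = cubeShift m (F x) := by
    intro x; ext i
    rw [mem_cubeShift]
    simp only [hF, Set.mem_setOf_eq]
    have e1 := hg_le_iff (g^[N-1] (g^[i.val] j0)) x
    rw [hginv] at e1
    rw [e1, ← Function.iterate_add_apply]
    have e2 : g^[N-1 + ZMod.val i] j0 = g^[(i-1 : ZMod m).val] j0 := by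
      apply hcastm
      push_cast [Nat.cast_sub hN0]
      rw [ZMod.natCast_rightInverse _, ZMod.natCast_rightInverse _]
      rw [(ZMod.natCast_eq_zero_iff N m).mpr hmN]
      ring
    rw [e2]
  have hFinj : Function.Injective F := by
    intro x y hxy
    have hall : ∀ w : L, SupIrred w → (w ≤ x ↔ w ≤ y) := by
      intro w hw
      obtain ⟨iN, hiN⟩ := horb j0 w hj0 hw
      have e3 : g^[iN] j0 = g^[((iN : ZMod m)).val] j0 :=
        hcastm _ _ (ZMod.natCast_rightInverse ((iN : ZMod m))).symm
      have h1 : (((iN : ZMod m)) ∈ F x) ↔ (((iN : ZMod m)) ∈ F y) := by rw [hxy]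
      simp only [hF, Set.mem_setOf_eq] at h1
      rw [← e3, hiN] at h1
      exact h1
    exact le_antisymm
      (hle_of_irr x y fun w hw hwx => (hall w hw).mp hwx)
      (hle_of_irr y x fun w hw hwy => (hall w hw).mpr hwy)
  have hFsurj : Function.Surjective F := by
    intro T
    set s : Finset (ZMod m) := Set.Finite.toFinset (Set.toFinite T) with hs
    refine ⟨s.sup (fun i => g^[i.val] j0), ?_⟩
    ext i
    simp only [hF, Set.mem_setOf_eq]
    rw [(hprime i).le_finset_sup]
    constructor
    · rintro ⟨t, ht, hle⟩
      have heq := hanti2 _ _ hle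
      have hval := hvalinj _ _ (ZMod.val_lt i) (ZMod.val_lt t) heq
      have hit : i = t := ZMod.val_injective m hval
      rw [hit]
      exact (Set.Finite.mem_toFinset _).mp ht
    · intro hiT
      exact ⟨i, (Set.Finite.mem_toFinset _).mpr hiT, le_rfl⟩
  exact ⟨m, hm0, hmN, F, ⟨hFinj, hFsurj⟩, fun x y => ⟨hFsup x y, hFinf x y⟩, hFrot⟩

/-- For a finite divisor-closed set `X` of positive integers, a
subdirectly irreducible rotational lattice belongs to `V(X)` iff it is isomorphic
to `𝔅_n` for some `n ∈ X`. -/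
theorem stmt_15 (X : Set ℕ) (hXfin : X.Finite) (hXpos : ∀ n ∈ X, 0 < n)
    (hXdiv : ∀ x ∈ X, ∀ y : ℕ, y ∣ x → 0 < y → y ∈ X)
    (L : Type*) [Lattice L] (g : L → L)
    (hsup : ∀ x y : L, g (x ⊔ y) = g x ⊔ g y)
    (hinf : ∀ x y : L, g (x ⊓ y) = g x ⊓ g y)
    (hbij : Function.Bijective g)
    (hord : ∃ m : ℕ, 0 < m ∧ g^[m] = id)
    (hSI : SubdirectlyIrreducible g) :
    MemV X g ↔
      ∃ n ∈ X, ∃ f : L → Set (ZMod n),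
        Function.Bijective f ∧
        (∀ x y : L, f (x ⊔ y) = f x ∪ f y ∧ f (x ⊓ y) = f x ∩ f y) ∧
        (∀ x : L, f (g x) = cubeShift n (f x)) := by
  classical
  constructor
  · -- forward direction
    intro hMem
    -- a nontrivial pair exists, by subdirect irreducibility
    have hpair : ∃ u v : L, u ≠ v := by
      obtain ⟨μ, hμc, hμne, hμmin⟩ := hSI
      by_contra h
      push_neg at h
      apply hμne
      funext u v
      apply propext
      exact ⟨fun _ => h u v, fun he => he ▸ hμc.1.refl u⟩
    -- X is nonempty
    have hXne : X.Nonempty := by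
      by_contra h
      rw [Set.not_nonempty_iff_eq_empty] at h
      obtain ⟨u, v, huv⟩ := hpair
      have := hMem (.var 0) (.var 1)
        (by intro n hn; rw [h] at hn; exact absurd hn (Set.notMem_empty n))
        (fun i => if i = 0 then u else v)
      simp only [RTerm.eval] at this
      norm_num at this
      exact huv this
    have h1X : 1 ∈ X := by
      obtain ⟨n₀, hn₀⟩ := hXne
      exact hXdiv n₀ hn₀ 1 (one_dvd _) one_pos
    -- the exponent N
    set N := ∏ n ∈ hXfin.toFinset, n with hN
    have hNdvd : ∀ n ∈ X, n ∣ N := fun n hn =>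
      Finset.dvd_prod_of_mem (fun k => k) (hXfin.mem_toFinset.mpr hn)
    have hN0 : 0 < N := Finset.prod_pos (fun n hn => hXpos n (hXfin.mem_toFinset.mp hn))
    have hNle : ∀ n ∈ X, n ≤ N := fun n hn => Nat.le_of_dvd hN0 (hNdvd n hn)
    -- distributivity of L
    have hdistrib : ∀ x y z : L, (x ⊔ y) ⊓ (x ⊔ z) ≤ x ⊔ (y ⊓ z) := by
      intro x y z
      have := hMem (.inf (.sup (.var 0) (.var 1)) (.sup (.var 0) (.var 2)))
        (.sup (.var 0) (.inf (.var 1) (.var 2))) ?_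
        (fun i => if i = 0 then x else if i = 1 then y else z)
      · simp only [RTerm.eval] at this
        norm_num at this
        exact le_of_eq this
      · intro n hn v
        simp only [RTerm.eval, Set.sup_eq_union, Set.inf_eq_inter]
        ext z
        simp only [Set.mem_union, Set.mem_inter_iff]
        tauto
    letI dL : DistribLattice L := { ‹Lattice L› with le_sup_inf := hdistrib }
    -- g^[N] = id
    have hgN : g^[N] = id := by
      funext x
      have := hMem (.rotN N (.var 0)) (.var 0) ?_ (fun _ => x)
      · rw [eval_rotN] at this
        exact this
      · intro n hn v
        haveI : NeZero n := ⟨(hXpos n hn).ne'⟩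
        rw [eval_rotN]
        ext z
        rw [iterate_cubeShift]
        have h0 : ((N : ℕ) : ZMod n) = 0 :=
          (ZMod.natCast_eq_zero_iff N n).mpr (hNdvd n hn)
        rw [h0, sub_zero]
    -- the main structural result
    obtain ⟨m, hm0, hmN, F, hFbij, hFhom, hFrot⟩ :=
      main_embed g hsup hinf hbij N hN0 hgN hSI
    refine ⟨m, ?_, F, hFbij, hFhom, hFrot⟩
    -- m ∈ X
    by_contra hmX
    have hm2 : 2 ≤ m := by
      rcases Nat.lt_or_ge m 2 with h | h
      · have : m = 1 := by omega
        rw [this] at hmX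
        exact absurd h1X hmX
      · exact h
    obtain ⟨t, s, hvalid, hfail⟩ := sep_identity m N hm2 hN0
    apply hfail
    obtain ⟨x0, hx0⟩ := hFbij.surjective ({0} : Set (ZMod m))
    have hLeq := hMem t s
      (fun n hn v => hvalid n (hXpos n hn) (hNle n hn)
        (fun hdvd => hmX (hXdiv n hn m hdvd hm0)) v)
      (fun _ => x0)
    have hcomm := eval_hom g (cubeShift m) F
      (fun x y => ((hFhom x y).1).trans (by simp [Set.sup_eq_union]))
      (fun x y => ((hFhom x y).2).trans (by simp [Set.inf_eq_inter]))
      hFrot (fun _ => x0)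
    have hv : (F ∘ fun _ : ℕ => x0) = (fun _ : ℕ => ({0} : Set (ZMod m))) :=
      funext fun _ => hx0
    have h1 := hcomm t
    have h2 := hcomm s
    rw [hv] at h1 h2
    rw [← h1, ← h2, hLeq]
  · -- backward direction
    rintro ⟨n, hnX, f, hfbij, hfhom, hfrot⟩ t s hvalid v
    apply hfbij.injective
    have hcomm := eval_hom g (cubeShift n) f
      (fun x y => ((hfhom x y).1).trans (by simp [Set.sup_eq_union]))
      (fun x y => ((hfhom x y).2).trans (by simp [Set.inf_eq_inter]))
      hfrot v
    rw [hcomm t, hcomm s]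
    exact hvalid n hnX (f ∘ v)
end
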